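/- arXiv:2203.08260 — 7 statements merged into one kernel-verified Lean document; each statement's English description precedes it below -/
import Mathlib

section
/- The function B(i) = E[Θ(1-(1-pi)^{Θ-1})] is concave on [0,1], and B(i) = B'(0)·i for all i∈[0,1] if and only if Θ∈{0,1,2} almost surely; otherwise B is strictly concave. -/
open MeasureTheory Set

/-!
For a fixed value `n` of `Θ`, the map `i ↦ n (1 - (1 - p i) ^ (n - 1))` is concave on `[0, 1]`
because `x ↦ x ^ (n - 1)` is convex on `[0, ∞)`; it is strictly concave when `n ≥ 3` and equal to
`p n (n - 1) i` when `n ≤ 2`. Integrating over `Θ` gives concavity of `B`, strict concavity as soon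
as `Θ ≥ 3` with positive probability, and linearity when `Θ ≤ 2` almost surely. Conversely a
strictly concave function is not linear, so linearity forces `Θ ≤ 2` almost surely.
-/

lemma integral_sub_const_mul_add_const_mul {Ω : Type*} [MeasurableSpace Ω] {μ : Measure Ω}
    {f g h : Ω → ℝ} (a b : ℝ) (hf : Integrable f μ) (hg : Integrable g μ)
    (hh : Integrable h μ) :
    ∫ ω, h ω - (a * f ω + b * g ω) ∂μ =
      ∫ ω, h ω ∂μ - (a * ∫ ω, f ω ∂μ + b * ∫ ω, g ω ∂μ) := by
  have hcombo : Integrable (fun ω => a * f ω + b * g ω) μ :=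
    (hf.const_mul a).add (hg.const_mul b)
  rw [integral_sub hh hcombo, integral_add (hf.const_mul a) (hg.const_mul b), integral_const_mul,
    integral_const_mul]

section IntegralOfConcave

variable {Ω E : Type*} [MeasurableSpace Ω] {μ : Measure Ω} [AddCommGroup E] [Module ℝ E]
  {s : Set E} {φ : Ω → E → ℝ}

lemma concaveOn_integral (hs : Convex ℝ s) (hφ : ∀ᵐ ω ∂μ, ConcaveOn ℝ s (φ ω))
    (hint : ∀ x ∈ s, Integrable (fun ω => φ ω x) μ) :
    ConcaveOn ℝ s fun x => ∫ ω, φ ω x ∂μ := by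
  refine ⟨hs, fun x hx y hy a b ha hb hab => ?_⟩
  have hgap : 0 ≤ ∫ ω, φ ω (a • x + b • y) - (a * φ ω x + b * φ ω y) ∂μ := by
    refine integral_nonneg_of_ae ?_
    filter_upwards [hφ] with ω hω
    exact sub_nonneg.2 (hω.2 hx hy ha hb hab)
  rw [integral_sub_const_mul_add_const_mul a b (hint x hx) (hint y hy)
    (hint _ (hs hx hy ha hb hab))] at hgap
  simpa only [smul_eq_mul, sub_nonneg] using hgap

lemma strictConcaveOn_integral (hs : Convex ℝ s) (hφ : ∀ᵐ ω ∂μ, ConcaveOn ℝ s (φ ω))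
    (hstrict : 0 < μ {ω | StrictConcaveOn ℝ s (φ ω)})
    (hint : ∀ x ∈ s, Integrable (fun ω => φ ω x) μ) :
    StrictConcaveOn ℝ s fun x => ∫ ω, φ ω x ∂μ := by
  refine ⟨hs, fun x hx y hy hxy a b ha hb hab => ?_⟩
  have hz := hint _ (hs hx hy ha.le hb.le hab)
  have hgap : 0 < ∫ ω, φ ω (a • x + b • y) - (a * φ ω x + b * φ ω y) ∂μ := by
    refine (integral_pos_iff_support_of_nonneg_ae ?_
      (hz.sub (((hint x hx).const_mul a).add ((hint y hy).const_mul b)))).2 ?_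
    · filter_upwards [hφ] with ω hω
      exact sub_nonneg.2 (hω.2 hx hy ha.le hb.le hab)
    · refine hstrict.trans_le (measure_mono fun ω hω => ?_)
      exact (sub_pos.2 (hω.2 hx hy hxy ha hb hab)).ne'
  rw [integral_sub_const_mul_add_const_mul a b (hint x hx) (hint y hy) hz] at hgap
  simpa only [smul_eq_mul, sub_pos] using hgap

end IntegralOfConcave

lemma StrictConcaveOn.not_eqOn_mul {f : ℝ → ℝ} {s : Set ℝ} {x y : ℝ}
    (hf : StrictConcaveOn ℝ s f) (hx : x ∈ s) (hy : y ∈ s) (hxy : x ≠ y) (c : ℝ) :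
    ¬ EqOn f (fun i => c * i) s := by
  intro heq
  have h := hf.2 hx hy hxy one_half_pos one_half_pos (add_halves 1)
  rw [heq hx, heq hy, heq (hf.1 hx hy one_half_pos.le one_half_pos.le (add_halves 1))] at h
  simp only [smul_eq_mul] at h
  linarith

section AffineReparametrization

variable {f : ℝ → ℝ} {s t : Set ℝ} {a c : ℝ}

lemma ConcaveOn.comp_sub_mul (hf : ConcaveOn ℝ t f) (hs : Convex ℝ s)
    (hst : MapsTo (fun x => a - c * x) s t) : ConcaveOn ℝ s fun x => f (a - c * x) := by
  refine ⟨hs, fun x hx y hy α β hα hβ hαβ => ?_⟩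
  have h := hf.2 (hst hx) (hst hy) hα hβ hαβ
  have hlin : α • (a - c * x) + β • (a - c * y) = a - c * (α • x + β • y) := by
    simp only [smul_eq_mul]; linear_combination a * hαβ
  rwa [hlin] at h

lemma StrictConcaveOn.comp_sub_mul (hf : StrictConcaveOn ℝ t f) (hc : c ≠ 0) (hs : Convex ℝ s)
    (hst : MapsTo (fun x => a - c * x) s t) : StrictConcaveOn ℝ s fun x => f (a - c * x) := by
  refine ⟨hs, fun x hx y hy hxy α β hα hβ hαβ => ?_⟩
  have hne : a - c * x ≠ a - c * y := fun h => hxy (mul_left_cancel₀ hc (by linarith))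
  have h := hf.2 (hst hx) (hst hy) hne hα hβ hαβ
  have hlin : α • (a - c * x) + β • (a - c * y) = a - c * (α • x + β • y) := by
    simp only [smul_eq_mul]; linear_combination a * hαβ
  rwa [hlin] at h

end AffineReparametrization

lemma concaveOn_natCast_mul_one_sub_pow (n : ℕ) :
    ConcaveOn ℝ (Ici 0) fun x : ℝ => (n : ℝ) * (1 - x ^ (n - 1)) := by
  refine ⟨convex_Ici 0, fun x hx y hy a b ha hb hab => ?_⟩
  have h := (convexOn_pow (n - 1)).2 hx hy ha hb hab
  simp only [smul_eq_mul] at h ⊢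
  nlinarith [mul_le_mul_of_nonneg_left h (Nat.cast_nonneg' (α := ℝ) n)]

lemma strictConcaveOn_natCast_mul_one_sub_pow {n : ℕ} (hn : 3 ≤ n) :
    StrictConcaveOn ℝ (Ici 0) fun x : ℝ => (n : ℝ) * (1 - x ^ (n - 1)) := by
  refine ⟨convex_Ici 0, fun x hx y hy hxy a b ha hb hab => ?_⟩
  have h := (strictConvexOn_pow (by omega : 2 ≤ n - 1)).2 hx hy hxy ha hb hab
  simp only [smul_eq_mul] at h ⊢
  nlinarith [mul_lt_mul_of_pos_left h (by positivity : (0 : ℝ) < n)]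

lemma natCast_mul_one_sub_one_sub_pow_of_le_two {n : ℕ} (hn : n ≤ 2) (x : ℝ) :
    (n : ℝ) * (1 - (1 - x) ^ (n - 1)) = x * ((n : ℝ) * ((n : ℝ) - 1)) := by
  interval_cases n <;> ring

lemma integrable_natCast_mul_one_sub_pow {Ω : Type*} [MeasurableSpace Ω] {μ : Measure Ω}
    {Θ : Ω → ℕ} (hΘ : Measurable Θ) (hint : Integrable (fun ω => (Θ ω : ℝ) ^ 2) μ)
    {u : ℝ} (hu : u ∈ Icc (0 : ℝ) 1) :
    Integrable (fun ω => (Θ ω : ℝ) * (1 - u ^ (Θ ω - 1))) μ := by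
  refine hint.mono ((measurable_from_top (f := fun n : ℕ => (n : ℝ) * (1 - u ^ (n - 1)))).comp
    hΘ).aestronglyMeasurable (ae_of_all _ fun ω => ?_)
  have hpow0 : 0 ≤ u ^ (Θ ω - 1) := pow_nonneg hu.1 _
  have hpow1 : u ^ (Θ ω - 1) ≤ 1 := pow_le_one₀ hu.1 hu.2
  have hsq : (Θ ω : ℝ) ≤ (Θ ω : ℝ) ^ 2 := by exact_mod_cast Nat.le_self_pow two_ne_zero (Θ ω)
  rw [Real.norm_of_nonneg (by positivity), Real.norm_of_nonneg (by positivity)]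
  nlinarith [Nat.cast_nonneg (α := ℝ) (Θ ω)]

theorem stmt2_general {Ω : Type*} [MeasurableSpace Ω] (P : Measure Ω) [IsProbabilityMeasure P]
    (Θ : Ω → ℕ) (hΘ : Measurable Θ)
    (hint : Integrable (fun ω => ((Θ ω : ℝ)) ^ 2) P)
    (p : ℝ) (hp : p ∈ Set.Ioc (0 : ℝ) 1)
    (B : ℝ → ℝ)
    (hB : ∀ i : ℝ, B i = ∫ ω, (Θ ω : ℝ) * (1 - (1 - p * i) ^ (Θ ω - 1)) ∂P) :
    ConcaveOn ℝ (Set.Icc 0 1) B ∧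
      ((∀ i ∈ Set.Icc (0 : ℝ) 1,
          B i = (p * ∫ ω, (Θ ω : ℝ) * ((Θ ω : ℝ) - 1) ∂P) * i) ↔
        P {ω | Θ ω ≤ 2} = 1) ∧
      (P {ω | Θ ω ≤ 2} ≠ 1 → StrictConcaveOn ℝ (Set.Icc 0 1) B) := by
  obtain ⟨hp0, hp1⟩ := hp
  have hB' : B = fun i => ∫ ω, (Θ ω : ℝ) * (1 - (1 - p * i) ^ (Θ ω - 1)) ∂P := funext hB
  have hmaps : MapsTo (fun i => 1 - p * i) (Icc 0 1) (Ici 0) := fun i hi => by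
    simp only [mem_Ici, sub_nonneg]; nlinarith [hi.1, hi.2]
  have hint' (i : ℝ) (hi : i ∈ Icc (0 : ℝ) 1) := integrable_natCast_mul_one_sub_pow hΘ hint
    (u := 1 - p * i) ⟨hmaps hi, by nlinarith [hi.1]⟩
  have hconc : ∀ᵐ ω ∂P,
      ConcaveOn ℝ (Icc 0 1) fun i => (Θ ω : ℝ) * (1 - (1 - p * i) ^ (Θ ω - 1)) :=
    ae_of_all _ fun ω =>
      (concaveOn_natCast_mul_one_sub_pow _).comp_sub_mul (convex_Icc 0 1) hmaps
  have hstrict (hne : P {ω | Θ ω ≤ 2} ≠ 1) : StrictConcaveOn ℝ (Icc 0 1) B := by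
    have hlarge : 0 < P {ω | Θ ω ≤ 2}ᶜ :=
      pos_iff_ne_zero.2 fun h => hne ((prob_compl_eq_zero_iff (hΘ measurableSet_Iic)).1 h)
    refine hB' ▸ strictConcaveOn_integral (convex_Icc 0 1) hconc
      (hlarge.trans_le (measure_mono fun ω hω => ?_)) hint'
    exact (strictConcaveOn_natCast_mul_one_sub_pow (Nat.lt_of_not_le hω)).comp_sub_mul hp0.ne'
      (convex_Icc 0 1) hmaps
  refine ⟨hB' ▸ concaveOn_integral (convex_Icc 0 1) hconc hint',
    ⟨fun hlin => ?_, fun hle i _ => ?_⟩, hstrict⟩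
  · by_contra hne
    exact (hstrict hne).not_eqOn_mul (left_mem_Icc.2 zero_le_one) (right_mem_Icc.2 zero_le_one)
      zero_ne_one _ hlin
  · have hae : ∀ᵐ ω ∂P, Θ ω ≤ 2 :=
      ae_iff.2 ((prob_compl_eq_zero_iff (hΘ measurableSet_Iic)).2 hle)
    rw [hB, integral_congr_ae (hae.mono fun ω hω =>
      natCast_mul_one_sub_one_sub_pow_of_le_two hω (p * i)), integral_const_mul]
    ring

theorem stmt2 {Ω : Type*} [MeasurableSpace Ω] (P : Measure Ω) [IsProbabilityMeasure P]
    (Θ : Ω → ℕ) (hΘ : Measurable Θ)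
    (h2 : 0 < P {ω | 2 ≤ Θ ω})
    (hint : Integrable (fun ω => ((Θ ω : ℝ)) ^ 2) P)
    (p : ℝ) (hp : p ∈ Set.Ioc (0 : ℝ) 1)
    (B : ℝ → ℝ)
    (hB : ∀ i : ℝ, B i = ∫ ω, (Θ ω : ℝ) * (1 - (1 - p * i) ^ (Θ ω - 1)) ∂P) :
    ConcaveOn ℝ (Set.Icc 0 1) B ∧
      ((∀ i ∈ Set.Icc (0 : ℝ) 1,
          B i = (p * ∫ ω, (Θ ω : ℝ) * ((Θ ω : ℝ) - 1) ∂P) * i) ↔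
        P {ω | Θ ω ≤ 2} = 1) ∧
      (P {ω | Θ ω ≤ 2} ≠ 1 → StrictConcaveOn ℝ (Set.Icc 0 1) B) :=
  stmt2_general P Θ hΘ hint p hp B hB
end

section
/- If Θ has logarithmic distribution with parameter α∈(0,1), i.e., P(Θ=k) = (-1/log(1-α))·α^k/k for k≥1, then for all ξ∈[0,1], E[Θ·ξ^{Θ-1}] = (-1/log(1-α))·α/(1-αξ), and B(i) = E[Θ(1-(1-pi)^{Θ-1})] = a·i/(1+b·i) where a = -α²p/((1-α)²log(1-α)) and b = αp/(1-α). -/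
/-!
Only the law of `Θ` matters, so `E[Θ ξ^(Θ-1)] = ∑ₖ P(Θ = k) k ξ^(k-1)`; for the logarithmic law the
`k`-th term is `c α (αξ)^(k-1)` with `c = -1/log(1-α)`, a geometric series. `B(i)` is the
difference of this generating function at `ξ = 1` and `ξ = 1 - p i`.
-/

open MeasureTheory Set

theorem integral_comp_eq_of_hasSum {Ω X : Type*} [MeasurableSpace Ω] [MeasurableSpace X]
    [Countable X] [MeasurableSingletonClass X] {P : Measure Ω} [IsFiniteMeasure P]
    {Y : Ω → X} (hY : Measurable Y) {f : X → ℝ} {a : ℝ}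
    (hf : HasSum (fun x ↦ P.real (Y ⁻¹' {x}) * f x) a) :
    ∫ ω, f (Y ω) ∂P = a := by
  set μ := P.map Y
  have hμ : ∀ x, μ.real {x} = P.real (Y ⁻¹' {x}) :=
    fun x ↦ map_measureReal_apply hY (measurableSet_singleton x)
  have hsum := hasSum_integral_sum_dirac (f := f) (x := id) (c := fun x ↦ μ {x})
    (fun _ ↦ measure_ne_top _ _)
    (by simpa [← measureReal_def, hμ, abs_mul, abs_of_nonneg measureReal_nonneg] using
      hf.summable.abs)
  simp only [id, Measure.sum_smul_dirac, ← measureReal_def, hμ, smul_eq_mul] at hsum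
  rw [← integral_map hY.aemeasurable (measurable_of_countable f).aestronglyMeasurable]
  exact hsum.unique hf

theorem hasSum_mul_mul_pow_pred_of_logarithmic {c α ξ : ℝ} {w : ℕ → ℝ}
    (hw : ∀ k, 1 ≤ k → w k = c * α ^ k / k) (hαξ : ‖α * ξ‖ < 1) :
    HasSum (fun k : ℕ ↦ w k * (k * ξ ^ (k - 1))) (c * (α / (1 - α * ξ))) := by
  rw [← hasSum_nat_add_iff' 1, Finset.sum_range_one, Nat.cast_zero, zero_mul, mul_zero, sub_zero,
    ← mul_div_assoc, div_eq_mul_inv]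
  refine ((hasSum_geometric_of_norm_lt_one hαξ).mul_left (c * α)).congr_fun fun n ↦ ?_
  rw [hw (n + 1) (Nat.le_add_left 1 n), Nat.add_sub_cancel]
  push_cast
  field_simp
  ring

theorem stmt7_general {Ω : Type*} [MeasurableSpace Ω] (P : Measure Ω) [IsProbabilityMeasure P]
    (Θ : Ω → ℕ) (hΘ : Measurable Θ)
    (α : ℝ) (hα : α ∈ Set.Ioo (0 : ℝ) 1) (p : ℝ) (hp : p ∈ Set.Icc (0 : ℝ) 1)
    (hdist : ∀ k : ℕ, 1 ≤ k →
      (P {ω | Θ ω = k}).toReal = (-1 / Real.log (1 - α)) * α ^ k / k) :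
    (∀ ξ ∈ Set.Icc (0 : ℝ) 1,
      (∫ ω, (Θ ω : ℝ) * ξ ^ (Θ ω - 1) ∂P)
        = (-1 / Real.log (1 - α)) * (α / (1 - α * ξ))) ∧
    (∀ i ∈ Set.Icc (0 : ℝ) 1,
      (∫ ω, (Θ ω : ℝ) * (1 - (1 - p * i) ^ (Θ ω - 1)) ∂P)
        = ((-α ^ 2 * p / ((1 - α) ^ 2 * Real.log (1 - α))) * i)
            / (1 + (α * p / (1 - α)) * i)) := by
  obtain ⟨hα0, hα1⟩ := hα
  have hmoment : ∀ ξ ∈ Icc (0 : ℝ) 1, HasSum (fun k : ℕ ↦ P.real (Θ ⁻¹' {k}) * (k * ξ ^ (k - 1)))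
      ((-1 / Real.log (1 - α)) * (α / (1 - α * ξ))) := fun ξ hξ ↦
    hasSum_mul_mul_pow_pred_of_logarithmic hdist <| by
      rw [Real.norm_of_nonneg (mul_nonneg hα0.le hξ.1)]
      nlinarith [hξ.2]
  refine ⟨fun ξ hξ ↦ integral_comp_eq_of_hasSum hΘ (hmoment ξ hξ), fun i hi ↦ ?_⟩
  have hpi : p * i ∈ Icc (0 : ℝ) 1 := ⟨mul_nonneg hp.1 hi.1, mul_le_one₀ hp.2 hi.1 hi.2⟩
  have hB := (hmoment 1 ⟨zero_le_one, le_rfl⟩).sub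
    (hmoment (1 - p * i) ⟨by linarith [hpi.2], by linarith [hpi.1]⟩)
  rw [integral_comp_eq_of_hasSum hΘ (f := fun k : ℕ ↦ (k : ℝ) * (1 - (1 - p * i) ^ (k - 1)))
    (hB.congr_fun fun k ↦ by ring)]
  have hlog : Real.log (1 - α) ≠ 0 := (Real.log_neg (by linarith) (by linarith)).ne
  have h1α : 1 - α ≠ 0 := by linarith
  have hden : 1 - α * (1 - p * i) ≠ 0 := by nlinarith [mul_nonneg hα0.le hpi.1]
  have hden' : 1 + α * p / (1 - α) * i ≠ 0 := by
    have : 0 ≤ α * p / (1 - α) * i :=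
      mul_nonneg (div_nonneg (mul_nonneg hα0.le hp.1) (by linarith)) hi.1
    linarith
  rw [eq_div_iff hden']
  field_simp
  ring

theorem stmt7 {Ω : Type*} [MeasurableSpace Ω] (P : Measure Ω) [IsProbabilityMeasure P]
    (Θ : Ω → ℕ) (hΘ : Measurable Θ)
    (α : ℝ) (hα : α ∈ Set.Ioo (0 : ℝ) 1) (p : ℝ) (hp : p ∈ Set.Icc (0 : ℝ) 1)
    (hdist : ∀ k : ℕ, 1 ≤ k →
      (P {ω | Θ ω = k}).toReal = (-1 / Real.log (1 - α)) * α ^ k / k)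
    (hdist0 : (P {ω | Θ ω = 0}).toReal = 0) :
    (∀ ξ ∈ Set.Icc (0 : ℝ) 1,
      (∫ ω, (Θ ω : ℝ) * ξ ^ (Θ ω - 1) ∂P)
        = (-1 / Real.log (1 - α)) * (α / (1 - α * ξ))) ∧
    (∀ i ∈ Set.Icc (0 : ℝ) 1,
      (∫ ω, (Θ ω : ℝ) * (1 - (1 - p * i) ^ (Θ ω - 1)) ∂P)
        = ((-α ^ 2 * p / ((1 - α) ^ 2 * Real.log (1 - α))) * i)
            / (1 + (α * p / (1 - α)) * i)) :=
  stmt7_general P Θ hΘ α hα p hp hdist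
end

section
/- Let (S̃,Ĩ,R̃) be multinomial with θ trials and probabilities (s,i,r) with s+i+r=1, and q∈[0,1]. Then E[S̃·q^Ĩ] = θs(1-i(1-q))^{θ-1}. -/
/-!
Computing the expectation over the finitely many values of `(S̃, Ĩ)` gives
`E[S̃ q^Ĩ] = ∑ a q^b P(S̃ = a, Ĩ = b)`, and `q^b P(S̃ = a, Ĩ = b)` is the `(a, b)` term of the
trinomial expansion of `(s + iq + r)^θ`. The absorption identity `a C(θ, a) = θ C(θ - 1, a - 1)`
turns the `a`-weighted sum into `θ s (s + iq + r)^(θ - 1)`, and `s + iq + r = 1 - i(1 - q)`.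
-/

open MeasureTheory Set

section FiniteRange

variable {Ω α E : Type*} [MeasurableSpace Ω] [MeasurableSpace α] [MeasurableSingletonClass α]
  [NormedAddCommGroup E] [NormedSpace ℝ E] [CompleteSpace E]

theorem integral_comp_eq_sum_of_forall_mem (μ : Measure Ω) [IsFiniteMeasure μ] {Z : Ω → α}
    (hZ : Measurable Z) {s : Finset α} (hs : ∀ ω, Z ω ∈ s) (g : α → E) :
    ∫ ω, g (Z ω) ∂μ = ∑ x ∈ s, μ.real (Z ⁻¹' {x}) • g x := by
  classical
  have hfib : ∀ x, MeasurableSet (Z ⁻¹' {x}) := fun x => hZ (measurableSet_singleton x)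
  have hsplit : (fun ω => g (Z ω)) = fun ω => ∑ x ∈ s, (Z ⁻¹' {x}).indicator (fun _ => g x) ω := by
    funext ω
    simp only [indicator_apply, mem_preimage, mem_singleton_iff]
    rw [Finset.sum_ite_eq, if_pos (hs ω)]
  rw [hsplit, integral_finsetSum _ fun x _ => (integrable_const (g x)).indicator (hfib x)]
  exact Finset.sum_congr rfl fun x _ => integral_indicator_const _ (hfib x)

end FiniteRange

section Trinomial

variable {R : Type*} [CommSemiring R]

/-- `n! / (a! b! (n-a-b)!) xᵃ yᵇ z^(n-a-b)`, written with binomials so that it vanishes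
without a case split when `a + b > n`. -/
def trinomialWeight (n a b : ℕ) (x y z : R) : R :=
  n.choose a * (n - a).choose b * x ^ a * y ^ b * z ^ (n - a - b)

theorem trinomialWeight_eq_zero_of_lt {n a b : ℕ} (h : n - a < b) (x y z : R) :
    trinomialWeight n a b x y z = 0 := by
  simp [trinomialWeight, Nat.choose_eq_zero_of_lt h]

theorem sum_sum_trinomialWeight (n : ℕ) (x y z : R) :
    ∑ a ∈ Finset.range (n + 1), ∑ b ∈ Finset.range (n + 1), trinomialWeight n a b x y z =
      (x + y + z) ^ n := by
  rw [add_assoc, add_pow, Finset.sum_congr rfl]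
  intro a _
  have hsub : Finset.range (n - a + 1) ⊆ Finset.range (n + 1) :=
    Finset.range_subset_range.mpr (by omega)
  rw [add_pow, ← Finset.sum_subset hsub, Finset.mul_sum, Finset.sum_mul]
  · refine Finset.sum_congr rfl fun b _ => ?_
    unfold trinomialWeight
    ring
  · intro b _ hb
    rw [Finset.mem_range, not_lt] at hb
    exact trinomialWeight_eq_zero_of_lt hb x y z

theorem succ_mul_trinomialWeight_succ (n a b : ℕ) (x y z : R) :
    (a + 1 : R) * trinomialWeight (n + 1) (a + 1) b x y z =
      (n + 1 : R) * x * trinomialWeight n a b x y z := by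
  have habs : (a + 1 : R) * (n + 1).choose (a + 1) = (n + 1) * n.choose a := by
    exact_mod_cast congrArg (Nat.cast : ℕ → R)
      ((Nat.add_one_mul_choose_eq n a).trans (mul_comm _ _)).symm
  unfold trinomialWeight
  rw [show n + 1 - (a + 1) = n - a by omega]
  calc _ = (a + 1 : R) * (n + 1).choose (a + 1) * ((n - a).choose b * x ^ a * y ^ b *
        z ^ (n - a - b)) * x := by ring
    _ = _ := by rw [habs]; ring

theorem sum_sum_natCast_mul_trinomialWeight (n : ℕ) (x y z : R) :
    ∑ a ∈ Finset.range (n + 1), ∑ b ∈ Finset.range (n + 1), (a : R) * trinomialWeight n a b x y z =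
      n * x * (x + y + z) ^ (n - 1) := by
  cases n with
  | zero => simp
  | succ m =>
    have hshift : ∀ a, ∑ b ∈ Finset.range (m + 2), ((a + 1 : ℕ) : R) *
        trinomialWeight (m + 1) (a + 1) b x y z =
        (m + 1) * x * ∑ b ∈ Finset.range (m + 1), trinomialWeight m a b x y z := by
      intro a
      rw [Finset.sum_range_succ, trinomialWeight_eq_zero_of_lt (by omega), mul_zero, add_zero,
        Finset.mul_sum]
      push_cast
      simp only [succ_mul_trinomialWeight_succ]
    rw [Finset.sum_range_succ', Finset.sum_congr rfl fun a _ => hshift a, ← Finset.mul_sum,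
      sum_sum_trinomialWeight]
    simp

end Trinomial

theorem trinomialWeight_eq_ite_factorial_div {K : Type*} [Field K] [CharZero K]
    (n a b : ℕ) (x y z : K) :
    trinomialWeight n a b x y z =
      if a + b ≤ n then
        (n.factorial : K) / (a.factorial * b.factorial * (n - a - b).factorial) *
          x ^ a * y ^ b * z ^ (n - a - b)
      else 0 := by
  split_ifs with hab
  · have hfac : ((n - a).factorial : K) ≠ 0 := Nat.cast_ne_zero.mpr (Nat.factorial_ne_zero _)
    rw [trinomialWeight, Nat.cast_choose K (by omega : a ≤ n),
      Nat.cast_choose K (by omega : b ≤ n - a), Nat.sub_sub]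
    field_simp
  · rcases le_or_gt a n with ha | ha
    · exact trinomialWeight_eq_zero_of_lt (by omega) x y z
    · simp [trinomialWeight, Nat.choose_eq_zero_of_lt ha]

theorem stmt11_general {Ω : Type*} [MeasurableSpace Ω] (P : Measure Ω) [IsProbabilityMeasure P]
    (St It Rt : Ω → ℕ) (hSt : Measurable St) (hIt : Measurable It)
    (θ : ℕ) (s i r q : ℝ)
    (hsum : s + i + r = 1)
    (htotal : ∀ ω, St ω + It ω + Rt ω = θ)
    (hdist : ∀ a b : ℕ,
      (P {ω | St ω = a ∧ It ω = b}).toReal =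
        if a + b ≤ θ then
          ((θ.factorial : ℝ) / ((a.factorial : ℝ) * (b.factorial : ℝ) *
              ((θ - a - b).factorial : ℝ))) * s ^ a * i ^ b * r ^ (θ - a - b)
        else 0) :
    (∫ ω, (St ω : ℝ) * q ^ (It ω) ∂P) = θ * s * (1 - i * (1 - q)) ^ (θ - 1) := by
  have hrange : ∀ ω, (St ω, It ω) ∈ Finset.range (θ + 1) ×ˢ Finset.range (θ + 1) := fun ω => by
    have := htotal ω
    simp only [Finset.mem_product, Finset.mem_range]
    omega
  have hterm : ∀ a b : ℕ, P.real ((fun ω => (St ω, It ω)) ⁻¹' {(a, b)}) • ((a : ℝ) * q ^ b) =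
      a * trinomialWeight θ a b s (i * q) r := by
    intro a b
    have hfib : (fun ω => (St ω, It ω)) ⁻¹' {(a, b)} = {ω | St ω = a ∧ It ω = b} := by
      ext ω
      simp
    rw [measureReal_def, hfib, hdist, ← trinomialWeight_eq_ite_factorial_div, trinomialWeight,
      trinomialWeight, mul_pow, smul_eq_mul]
    ring
  calc (∫ ω, (St ω : ℝ) * q ^ (It ω) ∂P)
      = ∑ a ∈ Finset.range (θ + 1), ∑ b ∈ Finset.range (θ + 1),
          (a : ℝ) * trinomialWeight θ a b s (i * q) r := by
        rw [integral_comp_eq_sum_of_forall_mem P (hSt.prodMk hIt) hrange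
          (fun p => (p.1 : ℝ) * q ^ p.2), Finset.sum_product]
        simp only [hterm]
    _ = θ * s * (1 - i * (1 - q)) ^ (θ - 1) := by
        rw [sum_sum_natCast_mul_trinomialWeight, show s + i * q + r = 1 - i * (1 - q) by
          linear_combination hsum]

theorem stmt11 {Ω : Type*} [MeasurableSpace Ω] (P : Measure Ω) [IsProbabilityMeasure P]
    (St It Rt : Ω → ℕ) (hSt : Measurable St) (hIt : Measurable It) (hRt : Measurable Rt)
    (θ : ℕ) (s i r q : ℝ)
    (hs : s ∈ Set.Icc (0 : ℝ) 1) (hi : i ∈ Set.Icc (0 : ℝ) 1) (hr : r ∈ Set.Icc (0 : ℝ) 1)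
    (hsum : s + i + r = 1) (hq : q ∈ Set.Icc (0 : ℝ) 1)
    (htotal : ∀ ω, St ω + It ω + Rt ω = θ)
    (hdist : ∀ a b : ℕ,
      (P {ω | St ω = a ∧ It ω = b}).toReal =
        if a + b ≤ θ then
          ((θ.factorial : ℝ) / ((a.factorial : ℝ) * (b.factorial : ℝ) *
              ((θ - a - b).factorial : ℝ))) * s ^ a * i ^ b * r ^ (θ - a - b)
        else 0) :
    (∫ ω, (St ω : ℝ) * q ^ (It ω) ∂P) = θ * s * (1 - i * (1 - q)) ^ (θ - 1) :=
  stmt11_general P St It Rt hSt hIt θ s i r q hsum htotal hdist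
end

section
/- The system s' = -μsB(i), i' = μsB(i) - γi, r' = γi with initial condition (s₀,i₀,r₀)∈[0,1]³, s₀+i₀+r₀=1, has a unique continuously differentiable global solution, which satisfies sₜ,iₜ,rₜ ≥ 0 and sₜ+iₜ+rₜ = 1 for all t ≥ 0. -/
/-!
On the simplex `s, i ≥ 0, s + i ≤ 1` the SIR system in the variables `(s, i)` (with
`r = 1 - s - i`) agrees with the field obtained by first clamping `s` and `i` to `[0, 1]`. The
clamped field is globally Lipschitz and bounded, so Picard–Lindelöf on ever longer intervals,
glued together by uniqueness, gives a global solution. The simplex is forward invariant for it: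
where `s < 0` the derivative of `s` vanishes, where `i < 0` so does that of `i` (as `B 0 = 0`),
and `(s + i)' = -γ i ≤ 0`. So the clamped solution solves the SIR system for `t ≥ 0`, and any
solution that stays in the simplex solves the clamped Lipschitz system, hence equals it.
-/

open Set
open scoped NNReal

section Prod

variable {𝕜 E F : Type*} [NontriviallyNormedField 𝕜] [NormedAddCommGroup E]
  [NormedSpace 𝕜 E] [NormedAddCommGroup F] [NormedSpace 𝕜 F]
  {p : 𝕜 → E × F} {v : E × F} {t : 𝕜}

theorem HasDerivAt.fst (h : HasDerivAt p v t) : HasDerivAt (fun u ↦ (p u).1) v.1 t :=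
  (hasFDerivAt_fst (p := p t)).comp_hasDerivAt t h

theorem HasDerivAt.snd (h : HasDerivAt p v t) : HasDerivAt (fun u ↦ (p u).2) v.2 t :=
  (hasFDerivAt_snd (p := p t)).comp_hasDerivAt t h

end Prod

theorem nonneg_of_hasDerivAt_of_deriv_nonneg_of_neg {f f' : ℝ → ℝ} {a b : ℝ} (hab : a ≤ b)
    (hf : ∀ t ∈ Icc a b, HasDerivAt f (f' t) t) (hf' : ∀ t, f t < 0 → 0 ≤ f' t)
    (ha : 0 ≤ f a) : 0 ≤ f b := by
  have hcont : ContinuousOn f (Icc a b) := fun t ht ↦ (hf t ht).continuousAt.continuousWithinAt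
  refine IsClosed.mem_of_ge_of_forall_exists_gt (s := {t | 0 ≤ f t}) ?_ ha hab ?_
  · rw [inter_comm]
    exact hcont.preimage_isClosed_of_isClosed isClosed_Icc isClosed_Ici
  rintro x ⟨hx, hax, hxb⟩
  by_contra hempty
  -- If `f < 0` on all of `(x, b]`, then `f` is monotone on `[x, b]`, so `f b ≥ f x ≥ 0`.
  have hneg : ∀ t ∈ Ioc x b, f t < 0 := fun t ht ↦ not_le.mp fun h ↦ hempty ⟨t, h, ht⟩
  have hmono : MonotoneOn f (Icc x b) := by
    refine monotoneOn_of_hasDerivWithinAt_nonneg (f' := f') (convex_Icc x b)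
      (hcont.mono (Icc_subset_Icc_left hax)) (fun t ht ↦ ?_) (fun t ht ↦ ?_) <;>
      rw [interior_Icc] at ht
    · exact (hf t ⟨hax.trans ht.1.le, ht.2.le⟩).hasDerivWithinAt
    · exact hf' t (hneg t (Ioo_subset_Ioc_self ht))
  exact (hneg b ⟨hxb, le_rfl⟩).not_ge
    (hx.trans (hmono ⟨le_rfl, hxb.le⟩ ⟨hxb.le, le_rfl⟩ hxb.le))

theorem LipschitzWith.mul_of_norm_le {α R : Type*} [PseudoMetricSpace α] [SeminormedRing R]
    {f g : α → R} {Kf Kg Mf Mg : ℝ≥0} (hf : LipschitzWith Kf f) (hg : LipschitzWith Kg g)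
    (hfM : ∀ x, ‖f x‖ ≤ Mf) (hgM : ∀ x, ‖g x‖ ≤ Mg) :
    LipschitzWith (Mf * Kg + Kf * Mg) fun x ↦ f x * g x := by
  refine LipschitzWith.of_dist_le_mul fun x y ↦ ?_
  rw [dist_eq_norm]
  calc ‖f x * g x - f y * g y‖ = ‖f x * (g x - g y) + (f x - f y) * g y‖ := by noncomm_ring
    _ ≤ ‖f x‖ * ‖g x - g y‖ + ‖f x - f y‖ * ‖g y‖ :=
        norm_add_le_of_le (norm_mul_le _ _) (norm_mul_le _ _)
    _ ≤ Mf * (Kg * dist x y) + Kf * dist x y * Mg := by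
        rw [← dist_eq_norm, ← dist_eq_norm]
        gcongr
        exacts [hfM x, hg.dist_le_mul x y, hf.dist_le_mul x y, hgM y]
    _ = ↑(Mf * Kg + Kf * Mg) * dist x y := by push_cast; ring

section Flow

variable {E : Type*} [NormedAddCommGroup E] [NormedSpace ℝ E] {F : E → E} {K C : ℝ≥0}

theorem eqOn_Icc_of_hasDerivAt (hF : LipschitzWith K F) {f g : ℝ → E} {a b : ℝ}
    (hf : ∀ t ∈ Icc a b, HasDerivAt f (F (f t)) t)
    (hg : ∀ t ∈ Icc a b, HasDerivAt g (F (g t)) t) (ha : f a = g a) : EqOn f g (Icc a b) :=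
  ODE_solution_unique (fun _ ↦ hF) (HasDerivAt.continuousOn hf)
    (fun t ht ↦ (hf t (Ico_subset_Icc_self ht)).hasDerivWithinAt) (HasDerivAt.continuousOn hg)
    (fun t ht ↦ (hg t (Ico_subset_Icc_self ht)).hasDerivWithinAt) ha

variable [CompleteSpace E]

theorem exists_hasDerivAt_of_abs_lt_of_lipschitzWith_of_norm_le (hF : LipschitzWith K F)
    (hC : ∀ x, ‖F x‖ ≤ C) (x₀ : E) (T : ℝ≥0) :
    ∃ γ : ℝ → E, γ 0 = x₀ ∧ ∀ t : ℝ, |t| < T → HasDerivAt γ (F (γ t)) t := by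
  have h0 : (0 : ℝ) ∈ Icc (-(T : ℝ)) T := ⟨by simp, T.coe_nonneg⟩
  have hPL : IsPicardLindelof (fun _ ↦ F) (⟨0, h0⟩ : Icc (-(T : ℝ)) T) x₀ (C * T) 0 C K :=
    .of_time_independent (fun x _ ↦ hC x) hF.lipschitzOnWith (by simp)
  obtain ⟨γ, hγ0, hγ⟩ := hPL.exists_eq_forall_mem_Icc_hasDerivWithinAt₀
  refine ⟨γ, hγ0, fun t ht ↦ ?_⟩
  obtain ⟨htl, htr⟩ := abs_lt.mp ht
  exact (hγ t ⟨htl.le, htr.le⟩).hasDerivAt (Icc_mem_nhds htl htr)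

theorem exists_hasDerivAt_of_lipschitzWith_of_norm_le (hF : LipschitzWith K F)
    (hC : ∀ x, ‖F x‖ ≤ C) (x₀ : E) :
    ∃ γ : ℝ → E, γ 0 = x₀ ∧ ∀ t, HasDerivAt γ (F (γ t)) t := by
  choose γ hγ0 hγ using fun n : ℕ ↦
    exists_hasDerivAt_of_abs_lt_of_lipschitzWith_of_norm_le hF hC x₀ n
  simp only [NNReal.coe_natCast] at hγ
  have hagree : ∀ m n : ℕ, ∀ t : ℝ, |t| < m → |t| < n → γ m t = γ n t := by
    intro m n t hm hn
    have hsol : ∀ k : ℕ, (m : ℝ) ⊓ n ≤ k →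
        ∀ u ∈ Ioo (-((m : ℝ) ⊓ n)) (m ⊓ n),
          HasDerivAt (γ k) (F (γ k u)) u ∧ γ k u ∈ univ :=
      fun k hk u hu ↦
        ⟨hγ k u (abs_lt.mpr ⟨by linarith [hu.1], by linarith [hu.2]⟩), trivial⟩
    have hmn : |t| < (m : ℝ) ⊓ n := lt_min hm hn
    have hpos : 0 < (m : ℝ) ⊓ n := (abs_nonneg t).trans_lt hmn
    exact ODE_solution_unique_of_mem_Ioo (s := fun _ ↦ univ)
      (fun _ _ ↦ hF.lipschitzOnWith) ⟨neg_neg_of_pos hpos, hpos⟩ (hsol m (min_le_left _ _))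
      (hsol n (min_le_right _ _)) (by rw [hγ0, hγ0]) (abs_lt.mp hmn)
  refine ⟨fun t ↦ γ (⌊|t|⌋₊ + 1) t, hγ0 _, fun t ↦ ?_⟩
  have ht : |t| < ((⌊|t|⌋₊ + 1 : ℕ) : ℝ) := by push_cast; exact Nat.lt_floor_add_one _
  refine (hγ _ t ht).congr_of_eventuallyEq ?_
  filter_upwards [(isOpen_lt continuous_abs continuous_const).mem_nhds ht] with u hu
  exact hagree _ _ u (by push_cast; exact Nat.lt_floor_add_one _) hu

end Flow

noncomputable def unitClamp (x : ℝ) : ℝ := projIcc 0 1 zero_le_one x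

theorem unitClamp_mem (x : ℝ) : unitClamp x ∈ Icc (0 : ℝ) 1 := Subtype.prop _

theorem unitClamp_of_mem {x : ℝ} (hx : x ∈ Icc (0 : ℝ) 1) : unitClamp x = x := by
  simp [unitClamp, projIcc_of_mem _ hx]

theorem unitClamp_of_neg {x : ℝ} (hx : x < 0) : unitClamp x = 0 := by
  simp [unitClamp, projIcc_of_le_left _ hx.le]

theorem norm_unitClamp_le (x : ℝ) : ‖unitClamp x‖ ≤ 1 := by
  rw [Real.norm_of_nonneg (unitClamp_mem x).1]
  exact (unitClamp_mem x).2

theorem lipschitzWith_unitClamp : LipschitzWith 1 unitClamp := by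
  have h := (LipschitzWith.subtype_val _).comp (LipschitzWith.projIcc (zero_le_one' ℝ))
  rw [mul_one] at h
  exact h

section SIR

variable (μ γ : ℝ) (B : ℝ → ℝ)

noncomputable def sirField (p : ℝ × ℝ) : ℝ × ℝ :=
  (-(μ * unitClamp p.1 * B (unitClamp p.2)),
    μ * unitClamp p.1 * B (unitClamp p.2) - γ * unitClamp p.2)

def sirSimplex : Set (ℝ × ℝ) := {p | 0 ≤ p.1 ∧ 0 ≤ p.2 ∧ p.1 + p.2 ≤ 1}

variable {μ γ B}

theorem sirField_of_mem {p : ℝ × ℝ} (hp : p ∈ sirSimplex) :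
    sirField μ γ B p = (-(μ * p.1 * B p.2), μ * p.1 * B p.2 - γ * p.2) := by
  obtain ⟨h1, h2, h12⟩ := hp
  rw [sirField, unitClamp_of_mem ⟨h1, by linarith⟩, unitClamp_of_mem ⟨h2, by linarith⟩]

variable {L : ℝ≥0}

theorem norm_comp_unitClamp_le (hB : LipschitzOnWith L B (Icc 0 1)) (hB0 : B 0 = 0) (x : ℝ) :
    ‖B (unitClamp x)‖ ≤ L := by
  have h := hB.dist_le_mul _ (unitClamp_mem x) 0 ⟨le_rfl, zero_le_one⟩
  rw [hB0, dist_zero_right, dist_zero_right] at h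
  calc ‖B (unitClamp x)‖ ≤ L * ‖unitClamp x‖ := h
    _ ≤ L * 1 := by gcongr; exact norm_unitClamp_le x
    _ = L := mul_one _

theorem lipschitzWith_sirField (hB : LipschitzOnWith L B (Icc 0 1)) (hB0 : B 0 = 0) :
    ∃ K, LipschitzWith K (sirField μ γ B) := by
  have hs : LipschitzWith (1 * 1) fun p : ℝ × ℝ ↦ unitClamp p.1 :=
    lipschitzWith_unitClamp.comp LipschitzWith.prod_fst
  have hi : LipschitzWith (1 * 1) fun p : ℝ × ℝ ↦ unitClamp p.2 :=
    lipschitzWith_unitClamp.comp LipschitzWith.prod_snd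
  have hBi : LipschitzWith (L * (1 * 1)) fun p : ℝ × ℝ ↦ B (unitClamp p.2) :=
    lipschitzOnWith_univ.mp (hB.comp hi.lipschitzOnWith fun p _ ↦ unitClamp_mem p.2)
  have hsB := hs.mul_of_norm_le hBi (Mf := 1) (Mg := L)
    (fun p ↦ by simpa using norm_unitClamp_le p.1)
    (fun p ↦ norm_comp_unitClamp_le hB hB0 p.2)
  have hinc := (lipschitzWith_smul μ).comp hsB
  simp only [Function.comp_def, smul_eq_mul, ← mul_assoc] at hinc
  exact ⟨_, hinc.neg.prodMk (hinc.sub ((lipschitzWith_smul γ).comp hi))⟩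


theorem norm_sirField_le (hB : LipschitzOnWith L B (Icc 0 1)) (hB0 : B 0 = 0) (p : ℝ × ℝ) :
    ‖sirField μ γ B p‖ ≤ ((‖μ‖₊ * L + ‖γ‖₊ : ℝ≥0) : ℝ) := by
  have hinc : ‖μ * unitClamp p.1 * B (unitClamp p.2)‖ ≤ ‖μ‖ * L := by
    rw [norm_mul, norm_mul]
    calc ‖μ‖ * ‖unitClamp p.1‖ * ‖B (unitClamp p.2)‖ ≤ ‖μ‖ * 1 * L := by
          gcongr
          exacts [norm_unitClamp_le _, norm_comp_unitClamp_le hB hB0 _]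
      _ = ‖μ‖ * L := by rw [mul_one]
  have hrec : ‖γ * unitClamp p.2‖ ≤ ‖γ‖ := by
    rw [norm_mul]
    exact mul_le_of_le_one_right (norm_nonneg _) (norm_unitClamp_le _)
  rw [sirField, Prod.norm_mk, norm_neg]
  push_cast
  refine max_le ?_ ?_
  · linarith [norm_nonneg γ]
  · exact (norm_sub_le _ _).trans (add_le_add hinc hrec)

theorem mem_sirSimplex_of_hasDerivAt (hB0 : B 0 = 0) (hγ : 0 ≤ γ) {p : ℝ → ℝ × ℝ}
    (hp : ∀ t, HasDerivAt p (sirField μ γ B (p t)) t) (h0 : p 0 ∈ sirSimplex) {t : ℝ}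
    (ht : 0 ≤ t) : p t ∈ sirSimplex := by
  have hS (u : ℝ) : HasDerivAt (fun u ↦ (p u).1) (sirField μ γ B (p u)).1 u :=
    (hp u).fst
  have hI (u : ℝ) : HasDerivAt (fun u ↦ (p u).2) (sirField μ γ B (p u)).2 u :=
    (hp u).snd
  obtain ⟨hS0, hI0, hsum0⟩ := h0
  have hS_nonneg : 0 ≤ (p t).1 :=
    nonneg_of_hasDerivAt_of_deriv_nonneg_of_neg ht (fun u _ ↦ hS u)
      (fun u hu ↦ by simp [sirField, unitClamp_of_neg hu]) hS0
  have hI_nonneg : 0 ≤ (p t).2 :=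
    nonneg_of_hasDerivAt_of_deriv_nonneg_of_neg ht (fun u _ ↦ hI u)
      (fun u hu ↦ by simp [sirField, unitClamp_of_neg hu, hB0]) hI0
  have hsum : Antitone fun u ↦ (p u).1 + (p u).2 :=
    antitone_of_hasDerivAt_nonpos (fun u ↦ (hS u).add (hI u)) fun u ↦ by
      simpa [sirField] using mul_nonneg hγ (unitClamp_mem (p u).2).1
  exact ⟨hS_nonneg, hI_nonneg, (hsum ht).trans hsum0⟩

end SIR

theorem stmt14_general (mu gam : ℝ) (hgam : 0 < gam)
    (B : ℝ → ℝ)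
    (hLip : ∃ L : NNReal, LipschitzOnWith L B (Set.Icc 0 1))
    (hB0 : B 0 = 0)
    (s0 i0 r0 : ℝ)
    (hs0 : s0 ∈ Set.Icc (0 : ℝ) 1) (hi0 : i0 ∈ Set.Icc (0 : ℝ) 1)
    (hr0 : r0 ∈ Set.Icc (0 : ℝ) 1) (hsum0 : s0 + i0 + r0 = 1) :
    ∃ s i r : ℝ → ℝ,
      (s 0 = s0 ∧ i 0 = i0 ∧ r 0 = r0) ∧
      (∀ t : ℝ, 0 ≤ t →
        HasDerivAt s (-(mu * s t * B (i t))) t ∧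
        HasDerivAt i (mu * s t * B (i t) - gam * i t) t ∧
        HasDerivAt r (gam * i t) t) ∧
      (∀ t : ℝ, 0 ≤ t → 0 ≤ s t ∧ 0 ≤ i t ∧ 0 ≤ r t ∧ s t + i t + r t = 1) ∧
      (∀ s' i' r' : ℝ → ℝ,
        (s' 0 = s0 ∧ i' 0 = i0 ∧ r' 0 = r0) →
        (∀ t : ℝ, 0 ≤ t →
          HasDerivAt s' (-(mu * s' t * B (i' t))) t ∧
          HasDerivAt i' (mu * s' t * B (i' t) - gam * i' t) t ∧
          HasDerivAt r' (gam * i' t) t) →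
        (∀ t : ℝ, 0 ≤ t → 0 ≤ s' t ∧ 0 ≤ i' t ∧ 0 ≤ r' t ∧ s' t + i' t + r' t = 1) →
        ∀ t : ℝ, 0 ≤ t → s' t = s t ∧ i' t = i t ∧ r' t = r t) := by
  obtain ⟨L, hL⟩ := hLip
  obtain ⟨K, hK⟩ := lipschitzWith_sirField (μ := mu) (γ := gam) hL hB0
  obtain ⟨p, hp0, hp⟩ :=
    exists_hasDerivAt_of_lipschitzWith_of_norm_le hK (norm_sirField_le hL hB0) (s0, i0)
  have hmem (t : ℝ) (ht : 0 ≤ t) : p t ∈ sirSimplex :=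
    mem_sirSimplex_of_hasDerivAt hB0 hgam.le hp
      (by rw [hp0]; exact ⟨hs0.1, hi0.1, by linarith [hr0.1]⟩) ht
  have hsir (t : ℝ) (ht : 0 ≤ t) :=
    sirField_of_mem (μ := mu) (γ := gam) (B := B) (hmem t ht) ▸ hp t
  refine ⟨fun t ↦ (p t).1, fun t ↦ (p t).2, fun t ↦ 1 - (p t).1 - (p t).2,
    ⟨by simp [hp0], by simp [hp0], by simp [hp0]; linarith⟩,
    fun t ht ↦ ⟨(hsir t ht).fst, (hsir t ht).snd, ?_⟩,
    fun t ht ↦ ⟨(hmem t ht).1, (hmem t ht).2.1, by linarith [(hmem t ht).2.2], by ring⟩, ?_⟩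
  · simpa [sub_sub] using ((hsir t ht).fst.add (hsir t ht).snd).const_sub 1
  intro s' i' r' h0 hsol hbd t ht
  have hq (u : ℝ) (hu : 0 ≤ u) :
      HasDerivAt (fun u ↦ (s' u, i' u)) (sirField mu gam B (s' u, i' u)) u := by
    obtain ⟨hs', hi', -⟩ := hsol u hu
    obtain ⟨hs'0, hi'0, hr'0, hsum'⟩ := hbd u hu
    rw [sirField_of_mem ⟨hs'0, hi'0, by linarith⟩]
    exact hs'.prodMk hi'
  have heq := eqOn_Icc_of_hasDerivAt hK (fun u hu ↦ hq u hu.1) (fun u _ ↦ hp u)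
    (by rw [hp0, h0.1, h0.2.1]) ⟨ht, le_rfl⟩
  obtain ⟨hs, hi⟩ := Prod.ext_iff.mp heq
  exact ⟨hs, hi, by linarith [(hbd t ht).2.2.2]⟩

theorem stmt14 (mu gam : ℝ) (hmu : 0 < mu) (hgam : 0 < gam)
    (B : ℝ → ℝ)
    (hLip : ∃ L : NNReal, LipschitzOnWith L B (Set.Icc 0 1))
    (hmono : MonotoneOn B (Set.Icc 0 1))
    (hB0 : B 0 = 0)
    (hBpos : ∀ x ∈ Set.Icc (0 : ℝ) 1, 0 ≤ B x)
    (s0 i0 r0 : ℝ)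
    (hs0 : s0 ∈ Set.Icc (0 : ℝ) 1) (hi0 : i0 ∈ Set.Icc (0 : ℝ) 1)
    (hr0 : r0 ∈ Set.Icc (0 : ℝ) 1) (hsum0 : s0 + i0 + r0 = 1) :
    ∃ s i r : ℝ → ℝ,
      (s 0 = s0 ∧ i 0 = i0 ∧ r 0 = r0) ∧
      (∀ t : ℝ, 0 ≤ t →
        HasDerivAt s (-(mu * s t * B (i t))) t ∧
        HasDerivAt i (mu * s t * B (i t) - gam * i t) t ∧
        HasDerivAt r (gam * i t) t) ∧
      (∀ t : ℝ, 0 ≤ t → 0 ≤ s t ∧ 0 ≤ i t ∧ 0 ≤ r t ∧ s t + i t + r t = 1) ∧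
      (∀ s' i' r' : ℝ → ℝ,
        (s' 0 = s0 ∧ i' 0 = i0 ∧ r' 0 = r0) →
        (∀ t : ℝ, 0 ≤ t →
          HasDerivAt s' (-(mu * s' t * B (i' t))) t ∧
          HasDerivAt i' (mu * s' t * B (i' t) - gam * i' t) t ∧
          HasDerivAt r' (gam * i' t) t) →
        (∀ t : ℝ, 0 ≤ t → 0 ≤ s' t ∧ 0 ≤ i' t ∧ 0 ≤ r' t ∧ s' t + i' t + r' t = 1) →
        ∀ t : ℝ, 0 ≤ t → s' t = s t ∧ i' t = i t ∧ r' t = r t) :=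
  stmt14_general mu gam hgam B hLip hB0 s0 i0 r0 hs0 hi0 hr0 hsum0
end

section
/- For the solution (sₜ,iₜ,rₜ) of the gathering SIR system, sₜ is non-increasing and rₜ is non-decreasing; moreover if s₀ ≤ γi₀/(μB(i₀)) then iₜ is decreasing for all t, while otherwise iₜ first increases to a maximum and then decreases. -/
/-!
Write `θ x = γ x / (μ B x)` and `w = s - θ ∘ i`, so that `i' = μ B(i) w`. Concavity and `B 0 = 0`
make `B x / x` antitone, hence `θ` monotone; as `s` strictly decreases, `w` strictly decreases on
every interval where `w ≥ 0` (there `i`, hence `θ ∘ i`, increases). So `{w ≤ 0}` is forward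
invariant and `i` is antitone from then on, strictly so because a plateau of `i` would force
`w = 0` on an interval. If `w 0 > 0`, then `w` must become nonpositive, since otherwise `i` grows
and `r' = γ i` pushes `r` above `1`; the peak of `i` is the first such time.
-/

open Set Real

theorem pos_of_neg_mul_le_deriv {f f' : ℝ → ℝ} {c : ℝ}
    (hf : ∀ t, 0 ≤ t → HasDerivAt f (f' t) t) (hf' : ∀ t, 0 ≤ t → -(c * f t) ≤ f' t)
    (h0 : 0 < f 0) {t : ℝ} (ht : 0 ≤ t) : 0 < f t := by
  have hg : ∀ u, 0 ≤ u →
      HasDerivAt (fun u => f u * exp (c * u)) ((f' u + c * f u) * exp (c * u)) u := by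
    intro u hu
    exact ((hf u hu).mul ((hasDerivAt_id' u).const_mul c).exp).congr_deriv (by ring)
  have hmono : MonotoneOn (fun u => f u * exp (c * u)) (Ici 0) :=
    monotoneOn_of_hasDerivWithinAt_nonneg (convex_Ici 0)
      (fun u hu => (hg u hu).continuousAt.continuousWithinAt)
      (fun u hu => (hg u (interior_subset hu)).hasDerivWithinAt)
      fun u hu => mul_nonneg (by linarith [hf' u (interior_subset hu)]) (exp_pos _).le
  have h0t : f 0 ≤ f t * exp (c * t) := by simpa using hmono self_mem_Ici ht ht
  exact (mul_pos_iff_of_pos_right (exp_pos _)).mp (h0.trans_le h0t)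

theorem nonpos_of_antitone_while_nonneg {w : ℝ → ℝ} {a b : ℝ} (hab : a ≤ b)
    (hw : ContinuousOn w (Icc a b))
    (hanti : ∀ c ∈ Icc a b, (∀ t ∈ Icc c b, 0 ≤ w t) → w b ≤ w c) (ha : w a ≤ 0) :
    w b ≤ 0 := by
  by_contra! hb
  set T := Icc a b ∩ w ⁻¹' Iic 0
  have hT : IsCompact T :=
    isCompact_Icc.of_isClosed_subset (hw.preimage_isClosed_of_isClosed isClosed_Icc isClosed_Iic)
      inter_subset_left
  obtain ⟨⟨hac, hcb⟩, hwc⟩ : sSup T ∈ T := hT.sSup_mem ⟨a, ⟨le_rfl, hab⟩, ha⟩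
  set c := sSup T
  have hpos : ∀ t ∈ Ioc c b, 0 < w t := fun t ht => by
    by_contra! h
    exact (le_csSup hT.bddAbove ⟨⟨hac.trans ht.1.le, ht.2⟩, h⟩).not_gt ht.1
  -- the last zero of `w` before `b` is `c` itself
  obtain ⟨z, ⟨hcz, hzb⟩, hwz⟩ :=
    intermediate_value_Icc hcb (hw.mono (Icc_subset_Icc_left hac)) ⟨hwc, hb.le⟩
  have hzc : z = c := le_antisymm (le_csSup hT.bddAbove ⟨⟨hac.trans hcz, hzb⟩, hwz.le⟩) hcz
  have hnonneg : ∀ t ∈ Icc c b, 0 ≤ w t := fun t ht =>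
    ht.1.eq_or_lt.elim (fun h => h ▸ hzc ▸ hwz.ge) fun h => (hpos t ⟨h, ht.2⟩).le
  exact (hanti c ⟨hac, hcb⟩ hnonneg).trans hwc |>.not_gt hb

section

variable {i k w : ℝ → ℝ}

theorem strictAntiOn_Ici_of_nonpos (hi : ∀ t, 0 ≤ t → HasDerivAt i (k t * w t) t)
    (hk : ∀ t, 0 ≤ t → 0 < k t) (hw : ContinuousOn w (Ici 0))
    (hdec : ∀ c d, 0 ≤ c → c < d → (∀ t ∈ Icc c d, 0 ≤ w t) → w d < w c)
    {a : ℝ} (ha : 0 ≤ a) (hwa : w a ≤ 0) : StrictAntiOn i (Ici a) := by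
  have hnonpos : ∀ t, a ≤ t → w t ≤ 0 := fun t hat =>
    nonpos_of_antitone_while_nonneg hat (hw.mono (Icc_subset_Ici_iff hat |>.2 ha))
      (fun c hc hnn => hc.2.eq_or_lt.elim (fun h => h ▸ le_rfl)
        fun h => (hdec c t (ha.trans hc.1) h hnn).le) hwa
  have hanti : AntitoneOn i (Ici a) :=
    antitoneOn_of_hasDerivWithinAt_nonpos (convex_Ici a)
      (fun t ht => (hi t (ha.trans ht)).continuousAt.continuousWithinAt)
      (fun t ht => (hi t (ha.trans (interior_subset ht))).hasDerivWithinAt)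
      fun t ht => mul_nonpos_of_nonneg_of_nonpos (hk t (ha.trans (interior_subset ht))).le
        (hnonpos t (interior_subset ht))
  -- if `i` took the same value twice it would be constant in between, forcing `w = 0` there
  have hne : ∀ c d, a ≤ c → c < d → i c ≠ i d := by
    intro c d hc hcd hcd_eq
    have hzero : ∀ t ∈ Ioo c d, w t = 0 := by
      intro t ht
      have hconst : i =ᶠ[nhds t] fun _ => i c :=
        Filter.eventually_of_mem (Ioo_mem_nhds ht.1 ht.2) fun u hu =>
          le_antisymm (hanti hc (hc.trans hu.1.le) hu.1.le)
            (hcd_eq ▸ hanti (hc.trans hu.1.le) (hc.trans hcd.le) hu.2.le)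
      have h0 := (hi t (ha.trans (hc.trans ht.1.le))).unique
        ((hasDerivAt_const t (i c)).congr_of_eventuallyEq hconst)
      exact (mul_eq_zero.mp h0).resolve_left (hk t (ha.trans (hc.trans ht.1.le))).ne'
    obtain ⟨m, hcm, hmd⟩ := exists_between hcd
    obtain ⟨m', hmm', hm'd⟩ := exists_between hmd
    have := hdec m m' (ha.trans (hc.trans hcm.le)) hmm' fun t ht =>
      (hzero t ⟨hcm.trans_le ht.1, ht.2.trans_lt hm'd⟩).ge
    rw [hzero m ⟨hcm, hmm'.trans hm'd⟩, hzero m' ⟨hcm.trans hmm', hm'd⟩] at this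
    exact this.false
  refine hanti.strictAntiOn_of_injOn fun c hc d hd hcd_eq => ?_
  rcases lt_trichotomy c d with h | h | h
  · exact absurd hcd_eq (hne c d hc h)
  · exact h
  · exact absurd hcd_eq.symm (hne d c hd h)

theorem exists_strictMonoOn_Icc_strictAntiOn_Ici
    (hi : ∀ t, 0 ≤ t → HasDerivAt i (k t * w t) t)
    (hk : ∀ t, 0 ≤ t → 0 < k t) (hw : ContinuousOn w (Ici 0))
    (hdec : ∀ c d, 0 ≤ c → c < d → (∀ t ∈ Icc c d, 0 ≤ w t) → w d < w c)
    (h0 : 0 < w 0) (hnot : ¬MonotoneOn i (Ici 0)) :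
    ∃ tm, 0 < tm ∧ StrictMonoOn i (Icc 0 tm) ∧ StrictAntiOn i (Ici tm) := by
  set S := Ici 0 ∩ w ⁻¹' Iic 0
  have hS : S.Nonempty := by
    by_contra hS
    refine hnot (monotoneOn_of_hasDerivWithinAt_nonneg (convex_Ici 0)
      (fun t ht => (hi t ht).continuousAt.continuousWithinAt)
      (fun t ht => (hi t (interior_subset ht)).hasDerivWithinAt) fun t ht => ?_)
    exact mul_nonneg (hk t (interior_subset ht)).le
      (not_lt.mp fun hwt => hS ⟨t, interior_subset ht, hwt.le⟩)
  have hbdd : BddBelow S := ⟨0, fun t ht => ht.1⟩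
  obtain ⟨htm, hwtm⟩ : sInf S ∈ S :=
    (hw.preimage_isClosed_of_isClosed isClosed_Ici isClosed_Iic).csInf_mem hS hbdd
  set tm := sInf S
  have hpos : ∀ t, 0 ≤ t → t < tm → 0 < w t := fun t ht htm => by
    by_contra! hwt
    exact (csInf_le hbdd ⟨ht, hwt⟩).not_gt htm
  have htm_pos : 0 < tm := htm.lt_of_ne fun h => by
    rw [← h] at hwtm
    exact (show w 0 ≤ 0 from hwtm).not_gt h0
  refine ⟨tm, htm_pos, ?_, strictAntiOn_Ici_of_nonpos hi hk hw hdec htm hwtm⟩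
  refine strictMonoOn_of_hasDerivWithinAt_pos (convex_Icc 0 tm)
    (fun t ht => (hi t ht.1).continuousAt.continuousWithinAt)
    (fun t ht => (hi t (interior_subset ht).1).hasDerivWithinAt) fun t ht => ?_
  rw [interior_Icc] at ht
  exact mul_pos (hk t ht.1.le) (hpos t ht.1.le ht.2)

end

theorem sub_comp_lt_of_forall_nonneg {s i k θ : ℝ → ℝ} {U : Set ℝ}
    (hs : StrictAntiOn s (Ici 0)) (hθ : MonotoneOn θ U) (hiU : ∀ t, 0 ≤ t → i t ∈ U)
    (hi : ∀ t, 0 ≤ t → HasDerivAt i (k t * (s t - θ (i t))) t) (hk : ∀ t, 0 ≤ t → 0 ≤ k t)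
    (c d : ℝ) (hc : 0 ≤ c) (hcd : c < d) (hw : ∀ t ∈ Icc c d, 0 ≤ s t - θ (i t)) :
    s d - θ (i d) < s c - θ (i c) := by
  have hd : 0 ≤ d := hc.trans hcd.le
  have hmono : MonotoneOn i (Icc c d) :=
    monotoneOn_of_hasDerivWithinAt_nonneg (convex_Icc c d)
      (fun t ht => (hi t (hc.trans ht.1)).continuousAt.continuousWithinAt)
      (fun t ht => (hi t (hc.trans (interior_subset ht).1)).hasDerivWithinAt)
      fun t ht => mul_nonneg (hk t (hc.trans (interior_subset ht).1)) (hw t (interior_subset ht))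
  have hθi : θ (i c) ≤ θ (i d) :=
    hθ (hiU c hc) (hiU d hd) (hmono (left_mem_Icc.2 hcd.le) (right_mem_Icc.2 hcd.le) hcd.le)
  linarith [hs hc hd hcd]

theorem not_monotoneOn_of_hasDerivAt_mul {i r : ℝ → ℝ} {gam : ℝ} (hgam : 0 < gam)
    (hi0 : 0 < i 0) (hr0 : 0 ≤ r 0) (hr1 : ∀ t, 0 ≤ t → r t ≤ 1)
    (hdr : ∀ t, 0 ≤ t → HasDerivAt r (gam * i t) t) : ¬MonotoneOn i (Ici 0) := by
  intro hmono
  -- a monotone `i` makes `r` grow at least linearly, by `2` within time `T`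
  set T := 2 / (gam * i 0)
  have hT : 0 < T := by positivity
  obtain ⟨ξ, hξ, hslope⟩ := exists_hasDerivAt_eq_slope r (fun t => gam * i t) hT
    (fun t ht => (hdr t ht.1).continuousAt.continuousWithinAt) fun t ht => hdr t ht.1.le
  have hiξ : i 0 ≤ i ξ := hmono self_mem_Ici hξ.1.le hξ.1.le
  have hrT : r T - r 0 = gam * i ξ * T := by
    rw [hslope, sub_zero, div_mul_cancel₀ _ hT.ne']
  have h2 : gam * i 0 * T = 2 := mul_div_cancel₀ 2 (by positivity)
  nlinarith [hr1 T hT.le, mul_le_mul_of_nonneg_right (mul_le_mul_of_nonneg_left hiξ hgam.le) hT.le]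

noncomputable def susceptibleThreshold (mu gam : ℝ) (B : ℝ → ℝ) (x : ℝ) : ℝ :=
  gam * x / (mu * B x)

theorem susceptibleThreshold_monotoneOn {mu gam : ℝ} {B : ℝ → ℝ} (hmu : 0 < mu) (hgam : 0 ≤ gam)
    (hconc : ConcaveOn ℝ (Icc 0 1) B) (hB0 : B 0 = 0) (hBpos : ∀ x ∈ Ioc 0 1, 0 < B x) :
    MonotoneOn (susceptibleThreshold mu gam B) (Ioc 0 1) := by
  intro x hx y hy hxy
  have hslope : B y / y ≤ B x / x := by
    have := hconc.antitoneOn_slope_gt (left_mem_Icc.2 zero_le_one)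
      ⟨Ioc_subset_Icc_self hx, hx.1⟩ ⟨Ioc_subset_Icc_self hy, hy.1⟩ hxy
    simpa [slope_def_field, hB0] using this
  have hx' : susceptibleThreshold mu gam B x = gam / (mu * (B x / x)) := by
    unfold susceptibleThreshold; field_simp [hx.1.ne']
  have hy' : susceptibleThreshold mu gam B y = gam / (mu * (B y / y)) := by
    unfold susceptibleThreshold; field_simp [hy.1.ne']
  rw [hx', hy']
  exact div_le_div_of_nonneg_left hgam (mul_pos hmu (div_pos (hBpos y hy) hy.1))
    (mul_le_mul_of_nonneg_left hslope hmu.le)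

theorem continuousOn_susceptibleThreshold {mu gam : ℝ} {B : ℝ → ℝ} (hmu : mu ≠ 0)
    (hB : ContinuousOn B (Icc 0 1)) (hBpos : ∀ x ∈ Ioc 0 1, 0 < B x) :
    ContinuousOn (susceptibleThreshold mu gam B) (Ioc 0 1) :=
  (continuousOn_const.mul continuousOn_id).div
    (continuousOn_const.mul (hB.mono Ioc_subset_Icc_self)) fun x hx =>
      mul_ne_zero hmu (hBpos x hx).ne'

theorem HasDerivAt.hasDerivAt_mul_sub_susceptibleThreshold {mu gam : ℝ} {B s i : ℝ → ℝ}
    {t : ℝ} (hdi : HasDerivAt i (mu * s t * B (i t) - gam * i t) t) (hB : mu * B (i t) ≠ 0) :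
    HasDerivAt i (mu * B (i t) * (s t - susceptibleThreshold mu gam B (i t))) t := by
  convert hdi using 1
  rw [susceptibleThreshold, mul_sub, mul_div_cancel₀ _ hB]
  ring

theorem susceptible_pos_and_infected_pos {mu gam : ℝ} {B s i : ℝ → ℝ} (hmu : 0 ≤ mu)
    (hB : MonotoneOn B (Icc 0 1)) (hB0 : B 0 = 0) (hs : ∀ t, 0 ≤ t → 0 ≤ s t)
    (hi : ∀ t, 0 ≤ t → i t ∈ Icc 0 1) (hs0 : 0 < s 0) (hi0 : 0 < i 0)
    (hds : ∀ t, 0 ≤ t → HasDerivAt s (-(mu * s t * B (i t))) t)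
    (hdi : ∀ t, 0 ≤ t → HasDerivAt i (mu * s t * B (i t) - gam * i t) t) {t : ℝ} (ht : 0 ≤ t) :
    0 < s t ∧ 0 < i t := by
  have hBi : ∀ u, 0 ≤ u → 0 ≤ mu * s u * B (i u) ∧ mu * s u * B (i u) ≤ mu * B 1 * s u :=
    fun u hu => by
      have hmus := mul_nonneg hmu (hs u hu)
      refine ⟨mul_nonneg hmus (hB0 ▸ hB (left_mem_Icc.2 zero_le_one) (hi u hu) (hi u hu).1), ?_⟩
      have hB1 := hB (hi u hu) (right_mem_Icc.2 zero_le_one) (hi u hu).2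
      linarith [mul_le_mul_of_nonneg_left hB1 hmus]
  exact ⟨pos_of_neg_mul_le_deriv (c := mu * B 1) hds (fun u hu => by linarith [hBi u hu]) hs0 ht,
    pos_of_neg_mul_le_deriv (c := gam) hdi (fun u hu => by linarith [hBi u hu]) hi0 ht⟩

theorem stmt15 (mu gam : ℝ) (hmu : 0 < mu) (hgam : 0 < gam)
    (B : ℝ → ℝ)
    (hLip : ∃ L : NNReal, LipschitzOnWith L B (Set.Icc 0 1))
    (hmono : StrictMonoOn B (Set.Icc 0 1))
    (hconc : ConcaveOn ℝ (Set.Icc 0 1) B)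
    (hB0 : B 0 = 0)
    (s i r : ℝ → ℝ)
    (hs0 : 0 < s 0) (hi0 : 0 < i 0) (hr0 : 0 ≤ r 0)
    (hrange : ∀ t : ℝ, 0 ≤ t → 0 ≤ s t ∧ 0 ≤ i t ∧ 0 ≤ r t ∧ s t + i t + r t = 1)
    (hds : ∀ t : ℝ, 0 ≤ t → HasDerivAt s (-(mu * s t * B (i t))) t)
    (hdi : ∀ t : ℝ, 0 ≤ t → HasDerivAt i (mu * s t * B (i t) - gam * i t) t)
    (hdr : ∀ t : ℝ, 0 ≤ t → HasDerivAt r (gam * i t) t) :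
    AntitoneOn s (Set.Ici 0) ∧ MonotoneOn r (Set.Ici 0) ∧
      (s 0 ≤ gam * i 0 / (mu * B (i 0)) → StrictAntiOn i (Set.Ici 0)) ∧
      (gam * i 0 / (mu * B (i 0)) < s 0 →
        ∃ tm : ℝ, 0 < tm ∧ StrictMonoOn i (Set.Icc 0 tm) ∧ StrictAntiOn i (Set.Ici tm)) := by
  have hbounds : ∀ t, 0 ≤ t → i t ∈ Icc (0 : ℝ) 1 ∧ r t ≤ 1 := fun t ht => by
    obtain ⟨hst, hit, hrt, hsum⟩ := hrange t ht
    exact ⟨⟨hit, by linarith⟩, by linarith⟩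
  have hpos : ∀ t, 0 ≤ t → 0 < s t ∧ 0 < i t := fun t =>
    susceptible_pos_and_infected_pos hmu.le hmono.monotoneOn hB0 (fun u hu => (hrange u hu).1)
      (fun u hu => (hbounds u hu).1) hs0 hi0 hds hdi
  have hBpos : ∀ x ∈ Ioc (0 : ℝ) 1, 0 < B x := fun x hx =>
    hB0 ▸ hmono (left_mem_Icc.2 zero_le_one) (Ioc_subset_Icc_self hx) hx.1
  have hiIoc : ∀ t, 0 ≤ t → i t ∈ Ioc (0 : ℝ) 1 := fun t ht =>
    ⟨(hpos t ht).2, (hbounds t ht).1.2⟩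
  have hk : ∀ t, 0 ≤ t → 0 < mu * B (i t) := fun t ht => mul_pos hmu (hBpos _ (hiIoc t ht))
  have hs : StrictAntiOn s (Ici 0) := strictAntiOn_of_hasDerivWithinAt_neg (convex_Ici 0)
    (fun t ht => (hds t ht).continuousAt.continuousWithinAt)
    (fun t ht => (hds t (interior_subset ht)).hasDerivWithinAt) fun t ht => by
      nlinarith [mul_pos ((hpos t (interior_subset ht)).1) (hk t (interior_subset ht))]
  have hr : MonotoneOn r (Ici 0) := monotoneOn_of_hasDerivWithinAt_nonneg (convex_Ici 0)
    (fun t ht => (hdr t ht).continuousAt.continuousWithinAt)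
    (fun t ht => (hdr t (interior_subset ht)).hasDerivWithinAt)
    fun t ht => mul_nonneg hgam.le (hpos t (interior_subset ht)).2.le
  set w := fun t => s t - susceptibleThreshold mu gam B (i t)
  have hiw : ∀ t, 0 ≤ t → HasDerivAt i (mu * B (i t) * w t) t := fun t ht =>
    (hdi t ht).hasDerivAt_mul_sub_susceptibleThreshold (hk t ht).ne'
  obtain ⟨L, hL⟩ := hLip
  have hw : ContinuousOn w (Ici 0) :=
    (continuousOn_of_forall_continuousAt fun t ht => (hds t ht).continuousAt).sub
      ((continuousOn_susceptibleThreshold hmu.ne' hL.continuousOn hBpos).comp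
        (fun t ht => (hdi t ht).continuousAt.continuousWithinAt) hiIoc)
  have hdec := sub_comp_lt_of_forall_nonneg hs
    (susceptibleThreshold_monotoneOn hmu hgam.le hconc hB0 hBpos) hiIoc hiw
    fun t ht => (hk t ht).le
  refine ⟨hs.antitoneOn, hr, fun h => ?_, fun h => ?_⟩
  · exact strictAntiOn_Ici_of_nonpos hiw hk hw hdec le_rfl (sub_nonpos.2 h)
  · exact exists_strictMonoOn_Icc_strictAntiOn_Ici hiw hk hw hdec (sub_pos.2 h)
      (not_monotoneOn_of_hasDerivAt_mul hgam hi0 hr0 (fun t ht => (hbounds t ht).2) hdr)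
end

section
/- Let (sₜ,iₜ,rₜ) solve s' = -μsB(i), i' = μsB(i)-γi, r' = γi and (ŝₜ,îₜ,r̂ₜ) solve the classic SIR system ŝ' = -βŝî, î' = βŝî-γî, r̂' = γî with β = μB'(0), both from the same initial condition (s₀,i₀,r₀) with s₀,i₀>0. Then sₜ ≥ ŝₜ for all t ≥ 0. -/
open Set Real

/-!
With `c = μ B'(0) / γ`, the quantity `s e^{c r}` is conserved along the classic SIR flow, and is
nondecreasing along the general one because `B(i) ≤ B'(0) i`; from the common initial value,
`ŝ e^{c r̂} ≤ s e^{c r}`. With `s + i + r = 1` and `e^x ≥ 1 + x` this gives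
`(r̂ - r)' + γ (1 - c) (r̂ - r) ≥ 0` wherever `r̂ - r < 0`, so `r ≤ r̂`, and then `ŝ ≤ s`.
-/

lemma monotoneOn_of_hasDerivAt_nonneg {D : Set ℝ} (hD : Convex ℝ D) {f f' : ℝ → ℝ}
    (hf : ∀ x ∈ D, HasDerivAt f (f' x) x) (hf' : ∀ x ∈ interior D, 0 ≤ f' x) :
    MonotoneOn f D :=
  monotoneOn_of_hasDerivWithinAt_nonneg hD
    (fun x hx => (hf x hx).continuousAt.continuousWithinAt)
    (fun x hx => (hf x (interior_subset hx)).hasDerivWithinAt) hf'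

lemma nonneg_of_deriv_nonneg_where_neg {f f' : ℝ → ℝ} {a : ℝ}
    (hf : ∀ t, a ≤ t → HasDerivAt f (f' t) t) (ha : 0 ≤ f a)
    (hf' : ∀ t, a ≤ t → f t < 0 → 0 ≤ f' t) {T : ℝ} (hT : a ≤ T) : 0 ≤ f T := by
  by_contra! hfT
  -- past the last time `sSup S ≤ T` at which `f ≥ 0`, `f` is negative, hence nondecreasing
  set S := Icc a T ∩ f ⁻¹' Ici 0
  have hS : IsClosed S := ContinuousOn.preimage_isClosed_of_isClosed
    (fun t ht => (hf t ht.1).continuousAt.continuousWithinAt) isClosed_Icc isClosed_Ici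
  have hbdd : BddAbove S := bddAbove_Icc.mono inter_subset_left
  obtain ⟨⟨hac, hcT⟩, hfc⟩ : sSup S ∈ S := hS.csSup_mem ⟨a, left_mem_Icc.2 hT, ha⟩ hbdd
  have hneg : ∀ t ∈ Ioo (sSup S) T, f t < 0 := fun t ht => by
    by_contra! h
    exact (le_csSup hbdd ⟨⟨hac.trans ht.1.le, ht.2.le⟩, h⟩).not_gt ht.1
  have hmono : MonotoneOn f (Icc (sSup S) T) :=
    monotoneOn_of_hasDerivAt_nonneg (convex_Icc _ _) (fun t ht => hf t (hac.trans ht.1))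
      (fun t ht => by
        rw [interior_Icc] at ht
        exact hf' t (hac.trans ht.1.le) (hneg t ht))
  exact hfT.not_ge (le_trans hfc (hmono (left_mem_Icc.2 hcT) (right_mem_Icc.2 hcT) hcT))

lemma nonneg_of_deriv_add_mul_nonneg_where_neg {f f' : ℝ → ℝ} {a : ℝ} (K : ℝ)
    (hf : ∀ t, a ≤ t → HasDerivAt f (f' t) t) (ha : 0 ≤ f a)
    (hf' : ∀ t, a ≤ t → f t < 0 → 0 ≤ f' t + K * f t) {T : ℝ} (hT : a ≤ T) : 0 ≤ f T := by
  have hexp (t : ℝ) : HasDerivAt (fun t => exp (K * t)) (exp (K * t) * K) t := by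
    simpa using ((hasDerivAt_id t).const_mul K).exp
  have := nonneg_of_deriv_nonneg_where_neg (f := fun t => f t * exp (K * t))
    (f' := fun t => (f' t + K * f t) * exp (K * t))
    (fun t ht => ((hf t ht).mul (hexp t)).congr_deriv (by ring)) (by positivity)
    (fun t ht hneg => mul_nonneg (hf' t ht (neg_of_mul_neg_left hneg (exp_pos _).le))
      (exp_pos _).le) hT
  exact nonneg_of_mul_nonneg_left this (exp_pos _)

lemma add_le_of_mul_exp_le {x y z : ℝ} (hx0 : 0 ≤ x) (hx1 : x ≤ 1) (hz : z ≤ 0)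
    (h : x * exp z ≤ y) : x + z ≤ y := by
  nlinarith [add_one_le_exp z, mul_nonneg (sub_nonneg.2 hx1) (neg_nonneg.2 hz)]

section SIR

variable {s r ρ : ℝ → ℝ} {a c : ℝ}

lemma hasDerivAt_mul_exp_mul {s' r' t : ℝ} (hs : HasDerivAt s s' t) (hr : HasDerivAt r r' t) :
    HasDerivAt (fun t => s t * exp (c * r t)) ((s' + c * s t * r') * exp (c * r t)) t :=
  (hs.mul (hr.const_mul c).exp).congr_deriv (by ring)

lemma monotoneOn_mul_exp_of_hasDerivAt {lam : ℝ → ℝ}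
    (hs : ∀ t, a ≤ t → 0 ≤ s t) (hlam : ∀ t, a ≤ t → lam t ≤ c * ρ t)
    (hds : ∀ t, a ≤ t → HasDerivAt s (-(s t * lam t)) t)
    (hdr : ∀ t, a ≤ t → HasDerivAt r (ρ t) t) :
    MonotoneOn (fun t => s t * exp (c * r t)) (Ici a) :=
  monotoneOn_of_hasDerivAt_nonneg (convex_Ici a)
    (fun t ht => hasDerivAt_mul_exp_mul (hds t ht) (hdr t ht))
    (fun t ht => by
      rw [interior_Ici] at ht
      have := mul_nonneg (hs t ht.le) (sub_nonneg.2 (hlam t ht.le))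
      nlinarith [exp_pos (c * r t)])

lemma mul_exp_eq_of_hasDerivAt
    (hds : ∀ t, a ≤ t → HasDerivAt s (-(c * s t * ρ t)) t)
    (hdr : ∀ t, a ≤ t → HasDerivAt r (ρ t) t) {T : ℝ} (hT : a ≤ T) :
    s T * exp (c * r T) = s a * exp (c * r a) := by
  have hderiv (t : ℝ) (ht : a ≤ t) : HasDerivAt (fun t => s t * exp (c * r t)) 0 t :=
    (hasDerivAt_mul_exp_mul (hds t ht) (hdr t ht)).congr_deriv (by ring)
  exact constant_of_has_deriv_right_zero
    (fun t ht => (hderiv t ht.1).continuousAt.continuousWithinAt)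
    (fun t ht => (hderiv t ht.1).hasDerivWithinAt) T ⟨hT, le_rfl⟩

lemma le_of_mul_exp_le_of_hasDerivAt {i sh ih rh : ℝ → ℝ} {gam : ℝ} (hgam : 0 ≤ gam)
    (hc : 0 ≤ c) (hsum : ∀ t, 0 ≤ t → s t + i t + r t = 1)
    (hsumh : ∀ t, 0 ≤ t → sh t + ih t + rh t = 1)
    (hsh0 : ∀ t, 0 ≤ t → 0 ≤ sh t) (hsh1 : ∀ t, 0 ≤ t → sh t ≤ 1)
    (hdr : ∀ t, 0 ≤ t → HasDerivAt r (gam * i t) t)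
    (hdrh : ∀ t, 0 ≤ t → HasDerivAt rh (gam * ih t) t) (h0 : r 0 ≤ rh 0)
    (hcomp : ∀ t, 0 ≤ t → sh t * exp (c * rh t) ≤ s t * exp (c * r t))
    {T : ℝ} (hT : 0 ≤ T) : r T ≤ rh T := by
  refine sub_nonneg.1 <| nonneg_of_deriv_add_mul_nonneg_where_neg (f := fun t => rh t - r t)
    (gam * (1 - c)) (fun t ht => (hdrh t ht).sub (hdr t ht)) (sub_nonneg.2 h0) ?_ hT
  intro t ht hneg
  have hexp : sh t * exp (c * (rh t - r t)) ≤ s t := by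
    rw [mul_sub, exp_sub, ← mul_div_assoc, div_le_iff₀ (exp_pos _)]
    exact hcomp t ht
  have hle := add_le_of_mul_exp_le (hsh0 t ht) (hsh1 t ht)
    (mul_nonpos_of_nonneg_of_nonpos hc hneg.le) hexp
  calc 0 ≤ gam * (s t - (sh t + c * (rh t - r t))) := mul_nonneg hgam (sub_nonneg.2 hle)
    _ = gam * ih t - gam * i t + gam * (1 - c) * (rh t - r t) := by
      linear_combination gam * (hsum t ht - hsumh t ht)

end SIR

theorem stmt16_general (mu gam d : ℝ) (hmu : 0 < mu) (hgam : 0 < gam)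
    (B : ℝ → ℝ)
    (hmono : StrictMonoOn B (Set.Icc 0 1))
    (hB0 : B 0 = 0)
    (hle : ∀ x ∈ Set.Icc (0 : ℝ) 1, B x ≤ d * x)
    (s0 i0 r0 : ℝ)
    (s i r : ℝ → ℝ) (sh ih rh : ℝ → ℝ)
    (hinit : s 0 = s0 ∧ i 0 = i0 ∧ r 0 = r0)
    (hinith : sh 0 = s0 ∧ ih 0 = i0 ∧ rh 0 = r0)
    (hrange : ∀ t : ℝ, 0 ≤ t → 0 ≤ s t ∧ 0 ≤ i t ∧ 0 ≤ r t ∧ s t + i t + r t = 1)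
    (hrangeh : ∀ t : ℝ, 0 ≤ t → 0 ≤ sh t ∧ 0 ≤ ih t ∧ 0 ≤ rh t ∧ sh t + ih t + rh t = 1)
    (hds : ∀ t : ℝ, 0 ≤ t → HasDerivAt s (-(mu * s t * B (i t))) t)
    (hdr : ∀ t : ℝ, 0 ≤ t → HasDerivAt r (gam * i t) t)
    (hdsh : ∀ t : ℝ, 0 ≤ t → HasDerivAt sh (-((mu * d) * sh t * ih t)) t)
    (hdrh : ∀ t : ℝ, 0 ≤ t → HasDerivAt rh (gam * ih t) t) :
    ∀ t : ℝ, 0 ≤ t → sh t ≤ s t := by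
  have hd : 0 ≤ d := by
    have := hmono.monotoneOn ⟨le_rfl, zero_le_one⟩ ⟨zero_le_one, le_rfl⟩ zero_le_one
    linarith [hle 1 ⟨zero_le_one, le_rfl⟩]
  obtain ⟨c, hcg⟩ : ∃ c, c * gam = mu * d := ⟨_, div_mul_cancel₀ _ hgam.ne'⟩
  have hc : 0 ≤ c := nonneg_of_mul_nonneg_left (hcg ▸ by positivity) hgam
  have hs_mono := monotoneOn_mul_exp_of_hasDerivAt (lam := fun t => mu * B (i t))
    (ρ := fun t => gam * i t) (c := c) (fun t ht => (hrange t ht).1)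
    (fun t ht => by
      obtain ⟨hs, hi, hr, hsum⟩ := hrange t ht
      have := mul_le_mul_of_nonneg_left (hle (i t) ⟨hi, by linarith⟩) hmu.le
      linear_combination this - i t * hcg)
    (fun t ht => (hds t ht).congr_deriv (by ring)) hdr
  have hcomp (t : ℝ) (ht : 0 ≤ t) : sh t * exp (c * rh t) ≤ s t * exp (c * r t) := by
    rw [mul_exp_eq_of_hasDerivAt (ρ := fun t => gam * ih t)
      (fun t ht => (hdsh t ht).congr_deriv (by rw [← hcg]; ring)) hdrh ht,
      hinith.1, hinith.2.2, ← hinit.1, ← hinit.2.2]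
    exact hs_mono self_mem_Ici ht ht
  intro t ht
  have hr := le_of_mul_exp_le_of_hasDerivAt hgam.le hc (fun t ht => (hrange t ht).2.2.2)
    (fun t ht => (hrangeh t ht).2.2.2) (fun t ht => (hrangeh t ht).1)
    (fun t ht => by linarith [hrangeh t ht]) hdr hdrh
    (by rw [hinit.2.2, hinith.2.2]) hcomp ht
  have : sh t * exp (c * r t) ≤ s t * exp (c * r t) :=
    (mul_le_mul_of_nonneg_left (exp_le_exp.2 (mul_le_mul_of_nonneg_left hr hc))
      (hrangeh t ht).1).trans (hcomp t ht)
  exact le_of_mul_le_mul_right this (exp_pos _)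

theorem stmt16 (mu gam d : ℝ) (hmu : 0 < mu) (hgam : 0 < gam)
    (B : ℝ → ℝ)
    (hd : HasDerivAt B d 0)
    (hmono : StrictMonoOn B (Set.Icc 0 1))
    (hconc : ConcaveOn ℝ (Set.Icc 0 1) B)
    (hB0 : B 0 = 0)
    (hle : ∀ x ∈ Set.Icc (0 : ℝ) 1, B x ≤ d * x)
    (s0 i0 r0 : ℝ) (hs0 : 0 < s0) (hi0 : 0 < i0) (hr0 : 0 ≤ r0) (hsum0 : s0 + i0 + r0 = 1)
    (s i r : ℝ → ℝ) (sh ih rh : ℝ → ℝ)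
    (hinit : s 0 = s0 ∧ i 0 = i0 ∧ r 0 = r0)
    (hinith : sh 0 = s0 ∧ ih 0 = i0 ∧ rh 0 = r0)
    (hrange : ∀ t : ℝ, 0 ≤ t → 0 ≤ s t ∧ 0 ≤ i t ∧ 0 ≤ r t ∧ s t + i t + r t = 1)
    (hrangeh : ∀ t : ℝ, 0 ≤ t → 0 ≤ sh t ∧ 0 ≤ ih t ∧ 0 ≤ rh t ∧ sh t + ih t + rh t = 1)
    (hds : ∀ t : ℝ, 0 ≤ t → HasDerivAt s (-(mu * s t * B (i t))) t)
    (hdi : ∀ t : ℝ, 0 ≤ t → HasDerivAt i (mu * s t * B (i t) - gam * i t) t)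
    (hdr : ∀ t : ℝ, 0 ≤ t → HasDerivAt r (gam * i t) t)
    (hdsh : ∀ t : ℝ, 0 ≤ t → HasDerivAt sh (-((mu * d) * sh t * ih t)) t)
    (hdih : ∀ t : ℝ, 0 ≤ t → HasDerivAt ih ((mu * d) * sh t * ih t - gam * ih t) t)
    (hdrh : ∀ t : ℝ, 0 ≤ t → HasDerivAt rh (gam * ih t) t) :
    ∀ t : ℝ, 0 ≤ t → sh t ≤ s t :=
  stmt16_general mu gam d hmu hgam B hmono hB0 hle s0 i0 r0 s i r sh ih rh hinit hinith hrange
    hrangeh hds hdr hdsh hdrh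
end

section
/- Let W^N be a multivariate hypergeometric sample of size Θ (without replacement) from a population of size N partitioned into three groups of sizes (S,I,R), and W the corresponding multinomial sample (with replacement, probabilities (S/N,I/N,R/N)), where Θ is a random size independent of the draws. Then the total variation distance between law(W^N) and law(W) is at most 2(1 - E[∏_{j=0}^{Θ-1}(N-j)/N]) + 2P(Θ>N). -/
/-!
Given `Θ = θ ≤ N`, multiplying the hypergeometric probability of `(a, b, c)` by the probability
`∏_{j<θ} (N - j)/N` that `θ` draws with replacement are pairwise distinct gives
`θ!/(a! b! c!) · S^(a) I^(b) R^(c) / N^θ` (falling factorials), which is at most the multinomial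
probability of `(a, b, c)`. So the law of `(Θ, W)` dominates the law of `(Θ, W^N)` reweighted by
that probability, a measure of mass `E[∏_{j<Θ} (N - j)/N]` lying below both laws. Two probability
measures with a common minorant of mass `m` differ on every set by at most `1 - m`.
-/

open MeasureTheory Set

namespace MeasureTheory.Measure

variable {α : Type*} [MeasurableSpace α]

lemma le_of_forall_singleton_le [Countable α] [MeasurableSingletonClass α] {μ ν : Measure α}
    (h : ∀ a, μ {a} ≤ ν {a}) : μ ≤ ν := by
  refine le_iff'.2 fun s ↦ ?_
  have hfib : ∀ a ∈ s, MeasurableSet (id ⁻¹' {a} : Set α) :=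
    fun a _ ↦ measurableSet_singleton a
  calc μ s = ∑' a : s, μ {(a : α)} := (tsum_measure_preimage_singleton s.to_countable hfib).symm
    _ ≤ ∑' a : s, ν {(a : α)} := ENNReal.tsum_le_tsum fun a ↦ h a
    _ = ν s := tsum_measure_preimage_singleton s.to_countable hfib

lemma abs_real_sub_real_le_of_le_of_le {μ ν ρ : Measure α} [IsFiniteMeasure μ]
    [IsFiniteMeasure ν] (hμ : ρ ≤ μ) (hν : ρ ≤ ν) (huniv : μ univ = ν univ) {s : Set α}
    (hs : MeasurableSet s) : |μ.real s - ν.real s| ≤ μ.real univ - ρ.real univ := by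
  have : IsFiniteMeasure ρ := isFiniteMeasure_of_le μ hμ
  have real_le {κ : Measure α} [IsFiniteMeasure κ] (h : ρ ≤ κ) (t : Set α) :
      ρ.real t ≤ κ.real t :=
    ENNReal.toReal_mono (measure_ne_top κ t) (h t)
  have hμν : μ.real univ = ν.real univ := congrArg ENNReal.toReal huniv
  have hμs := measureReal_add_measureReal_compl (μ := μ) hs
  have hνs := measureReal_add_measureReal_compl (μ := ν) hs
  have hρs := measureReal_add_measureReal_compl (μ := ρ) hs
  -- `μ s - ν s ≤ μ s - ρ s ≤ μ univ - ρ sᶜ - ρ s`, and symmetrically.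
  refine abs_sub_le_iff.2 ⟨?_, ?_⟩ <;>
    linarith [real_le hμ s, real_le hμ sᶜ, real_le hν s, real_le hν sᶜ]

end MeasureTheory.Measure

section Domination

variable {Ω α β : Type*} [MeasurableSpace Ω] [MeasurableSpace α] [MeasurableSpace β]
  [Countable α] [Countable β] [MeasurableSingletonClass α] [MeasurableSingletonClass β]

lemma abs_measureReal_preimage_sub_le_one_sub_integral {P : Measure Ω} [IsProbabilityMeasure P]
    {Θ : Ω → β} {X Y : Ω → α} (hΘ : Measurable Θ) (hX : Measurable X) (hY : Measurable Y)
    {f : β → ℝ} (hf_nonneg : ∀ θ, 0 ≤ f θ) (hf_le_one : ∀ θ, f θ ≤ 1)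
    (hdom : ∀ θ x, f θ * P.real {ω | Θ ω = θ ∧ X ω = x} ≤ P.real {ω | Θ ω = θ ∧ Y ω = x})
    (A : Set α) :
    |P.real (X ⁻¹' A) - P.real (Y ⁻¹' A)| ≤ 1 - ∫ ω, f (Θ ω) ∂P := by
  have hΘX : Measurable fun ω ↦ (Θ ω, X ω) := hΘ.prodMk hX
  have hΘY : Measurable fun ω ↦ (Θ ω, Y ω) := hΘ.prodMk hY
  have hpre (Z : Ω → α) (θ : β) (x : α) :
      (fun ω ↦ (Θ ω, Z ω)) ⁻¹' {(θ, x)} = {ω | Θ ω = θ ∧ Z ω = x} := by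
    ext ω; simp [Prod.ext_iff]
  set μX := P.map fun ω ↦ (Θ ω, X ω)
  set μY := P.map fun ω ↦ (Θ ω, Y ω)
  have : IsProbabilityMeasure μX := Measure.isProbabilityMeasure_map hΘX.aemeasurable
  have : IsProbabilityMeasure μY := Measure.isProbabilityMeasure_map hΘY.aemeasurable
  set ρ := μX.withDensity fun p ↦ ENNReal.ofReal (f p.1)
  have hρX : ρ ≤ μX := by
    refine (withDensity_mono (ae_of_all _ fun p ↦ ?_)).trans withDensity_one.le
    exact ENNReal.ofReal_le_one.2 (hf_le_one p.1)
  have hρY : ρ ≤ μY := by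
    refine Measure.le_of_forall_singleton_le fun ⟨θ, x⟩ ↦ ?_
    rw [withDensity_apply _ (measurableSet_singleton _), lintegral_singleton,
      Measure.map_apply hΘX (measurableSet_singleton _),
      Measure.map_apply hΘY (measurableSet_singleton _),
      hpre, hpre, ← ofReal_measureReal, ← ofReal_measureReal, ← ENNReal.ofReal_mul (hf_nonneg θ)]
    exact ENNReal.ofReal_le_ofReal (hdom θ x)
  have hρ_univ : ρ.real univ = ∫ ω, f (Θ ω) ∂P := by
    have hfΘ : Measurable fun ω ↦ f (Θ ω) := (measurable_of_countable f).comp hΘ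
    rw [measureReal_def, withDensity_apply _ MeasurableSet.univ, Measure.restrict_univ,
      lintegral_map (measurable_of_countable _) hΘX,
      integral_eq_lintegral_of_nonneg_ae (ae_of_all _ fun ω ↦ hf_nonneg _)
        hfΘ.aestronglyMeasurable]
  have hA : MeasurableSet (Prod.snd ⁻¹' A : Set (β × α)) := (Set.to_countable _).measurableSet
  have key := Measure.abs_real_sub_real_le_of_le_of_le hρX hρY (by simp) hA
  rw [map_measureReal_apply hΘX hA, map_measureReal_apply hΘY hA, probReal_univ, hρ_univ] at key
  exact key

end Domination

noncomputable def distinctDrawsProb (N θ : ℕ) : ℝ := ∏ j ∈ Finset.range θ, (((N : ℝ) - j) / N)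

lemma distinctDrawsProb_eq_descFactorial_div_pow (N θ : ℕ) :
    distinctDrawsProb N θ = N.descFactorial θ / (N : ℝ) ^ θ := by
  rw [distinctDrawsProb, Finset.prod_div_distrib, Finset.prod_const, Finset.card_range,
    ← descPochhammer_eval_eq_prod_range, descPochhammer_eval_eq_descFactorial]

lemma distinctDrawsProb_nonneg (N θ : ℕ) : 0 ≤ distinctDrawsProb N θ := by
  rw [distinctDrawsProb_eq_descFactorial_div_pow]
  positivity

lemma distinctDrawsProb_le_one (N θ : ℕ) : distinctDrawsProb N θ ≤ 1 := by
  rw [distinctDrawsProb_eq_descFactorial_div_pow]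
  exact div_le_one_of_le₀ (mod_cast N.descFactorial_le_pow θ) (by positivity)

lemma distinctDrawsProb_eq_zero_of_lt {N θ : ℕ} (h : N < θ) : distinctDrawsProb N θ = 0 := by
  rw [distinctDrawsProb_eq_descFactorial_div_pow, Nat.descFactorial_eq_zero_iff_lt.2 h,
    Nat.cast_zero, zero_div]

-- For `θ > N` this encodes the convention `W^N = (0, 0, 0)`.
noncomputable def hypergeometricPMF (N S I R θ a b c : ℕ) : ℝ :=
  if θ ≤ N then
    (if a + b + c = θ then
      ((S.choose a : ℝ) * (I.choose b : ℝ) * (R.choose c : ℝ)) / (N.choose θ : ℝ)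
    else 0)
  else (if (a, b, c) = (0, 0, 0) then 1 else 0)

noncomputable def multinomialPMF (N S I R θ a b c : ℕ) : ℝ :=
  if a + b + c = θ then
    ((θ.factorial : ℝ) / ((a.factorial : ℝ) * (b.factorial : ℝ) * (c.factorial : ℝ))) *
      ((S : ℝ) / N) ^ a * ((I : ℝ) / N) ^ b * ((R : ℝ) / N) ^ c
  else 0

lemma multinomialPMF_nonneg (N S I R θ a b c : ℕ) : 0 ≤ multinomialPMF N S I R θ a b c := by
  unfold multinomialPMF
  split_ifs <;> positivity

lemma distinctDrawsProb_mul_choose_div_choose_le {N S I R θ a b c : ℕ} (hθ : θ ≤ N)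
    (habc : a + b + c = θ) :
    distinctDrawsProb N θ *
        (((S.choose a : ℝ) * (I.choose b : ℝ) * (R.choose c : ℝ)) / (N.choose θ : ℝ)) ≤
      ((θ.factorial : ℝ) / ((a.factorial : ℝ) * (b.factorial : ℝ) * (c.factorial : ℝ))) *
        ((S : ℝ) / N) ^ a * ((I : ℝ) / N) ^ b * ((R : ℝ) / N) ^ c := by
  have hchoose : (N.choose θ : ℝ) ≠ 0 := mod_cast (Nat.choose_pos hθ).ne'
  have hlhs : distinctDrawsProb N θ *
        (((S.choose a : ℝ) * (I.choose b : ℝ) * (R.choose c : ℝ)) / (N.choose θ : ℝ)) =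
      (θ.factorial : ℝ) / (N : ℝ) ^ θ * ((S.choose a : ℝ) * (I.choose b) * (R.choose c)) := by
    rw [distinctDrawsProb_eq_descFactorial_div_pow, Nat.descFactorial_eq_factorial_mul_choose,
      Nat.cast_mul]
    field_simp
  have hrhs : ((θ.factorial : ℝ) / ((a.factorial : ℝ) * (b.factorial : ℝ) * (c.factorial : ℝ))) *
        ((S : ℝ) / N) ^ a * ((I : ℝ) / N) ^ b * ((R : ℝ) / N) ^ c =
      (θ.factorial : ℝ) / (N : ℝ) ^ θ *
        ((S : ℝ) ^ a / a.factorial * ((I : ℝ) ^ b / b.factorial) *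
          ((R : ℝ) ^ c / c.factorial)) := by
    rw [← habc]
    simp only [div_pow, pow_add]
    ring
  rw [hlhs, hrhs]
  gcongr <;> exact Nat.choose_le_pow_div _ _

lemma distinctDrawsProb_mul_hypergeometricPMF_le (N S I R θ a b c : ℕ) :
    distinctDrawsProb N θ * hypergeometricPMF N S I R θ a b c ≤
      multinomialPMF N S I R θ a b c := by
  by_cases hθ : θ ≤ N
  · by_cases habc : a + b + c = θ
    · simpa only [hypergeometricPMF, multinomialPMF, if_pos hθ, if_pos habc]
        using distinctDrawsProb_mul_choose_div_choose_le hθ habc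
    · simp [hypergeometricPMF, multinomialPMF, hθ, habc]
  · rw [distinctDrawsProb_eq_zero_of_lt (not_le.1 hθ), zero_mul]
    exact multinomialPMF_nonneg N S I R θ a b c

theorem stmt18_general {Ω : Type*} [MeasurableSpace Ω] (Pr : Measure Ω) [IsProbabilityMeasure Pr]
    (N S I R : ℕ)
    (Θ : Ω → ℕ) (hΘ : Measurable Θ)
    (WN W : Ω → ℕ × ℕ × ℕ) (hWN : Measurable WN) (hW : Measurable W)
    -- joint law of (Θ, WN): given Θ = θ ≤ N, WN is multivariate hypergeometric
    -- (sampling θ individuals without replacement); WN = (0,0,0) when Θ > N: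
    (hlawN : ∀ (θ a b c : ℕ),
      (Pr {ω | Θ ω = θ ∧ WN ω = (a, b, c)}).toReal =
        (Pr {ω | Θ ω = θ}).toReal *
          (if θ ≤ N then
            (if a + b + c = θ then
              ((S.choose a : ℝ) * (I.choose b : ℝ) * (R.choose c : ℝ)) / (N.choose θ : ℝ)
            else 0)
          else (if (a, b, c) = (0, 0, 0) then 1 else 0)))
    -- joint law of (Θ, W): given Θ = θ, W is multinomial with θ trials and
    -- probabilities (S/N, I/N, R/N) (sampling with replacement):
    (hlaw : ∀ (θ a b c : ℕ),
      (Pr {ω | Θ ω = θ ∧ W ω = (a, b, c)}).toReal =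
        (Pr {ω | Θ ω = θ}).toReal *
          (if a + b + c = θ then
            ((θ.factorial : ℝ) /
                ((a.factorial : ℝ) * (b.factorial : ℝ) * (c.factorial : ℝ))) *
              ((S : ℝ) / N) ^ a * ((I : ℝ) / N) ^ b * ((R : ℝ) / N) ^ c
          else 0)) :
    ∀ A : Set (ℕ × ℕ × ℕ),
      |(Pr (WN ⁻¹' A)).toReal - (Pr (W ⁻¹' A)).toReal| ≤
        (1 - ∫ ω, ∏ j ∈ Finset.range (Θ ω), (((N : ℝ) - j) / N) ∂Pr)
          + (Pr {ω | N < Θ ω}).toReal := by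
  intro A
  have hdom : ∀ θ (x : ℕ × ℕ × ℕ), distinctDrawsProb N θ * Pr.real {ω | Θ ω = θ ∧ WN ω = x} ≤
      Pr.real {ω | Θ ω = θ ∧ W ω = x} := by
    rintro θ ⟨a, b, c⟩
    rw [measureReal_def, measureReal_def, hlawN, hlaw, mul_left_comm]
    exact mul_le_mul_of_nonneg_left (distinctDrawsProb_mul_hypergeometricPMF_le N S I R θ a b c)
      ENNReal.toReal_nonneg
  calc |(Pr (WN ⁻¹' A)).toReal - (Pr (W ⁻¹' A)).toReal|
      ≤ 1 - ∫ ω, distinctDrawsProb N (Θ ω) ∂Pr :=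
        abs_measureReal_preimage_sub_le_one_sub_integral hΘ hWN hW (distinctDrawsProb_nonneg N)
          (distinctDrawsProb_le_one N) hdom A
    _ ≤ _ := le_add_of_nonneg_right ENNReal.toReal_nonneg

theorem stmt18 {Ω : Type*} [MeasurableSpace Ω] (Pr : Measure Ω) [IsProbabilityMeasure Pr]
    (N S I R : ℕ) (hN : 0 < N) (hSIR : S + I + R = N)
    (Θ : Ω → ℕ) (hΘ : Measurable Θ)
    (WN W : Ω → ℕ × ℕ × ℕ) (hWN : Measurable WN) (hW : Measurable W)
    -- joint law of (Θ, WN): given Θ = θ ≤ N, WN is multivariate hypergeometric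
    -- (sampling θ individuals without replacement); WN = (0,0,0) when Θ > N:
    (hlawN : ∀ (θ a b c : ℕ),
      (Pr {ω | Θ ω = θ ∧ WN ω = (a, b, c)}).toReal =
        (Pr {ω | Θ ω = θ}).toReal *
          (if θ ≤ N then
            (if a + b + c = θ then
              ((S.choose a : ℝ) * (I.choose b : ℝ) * (R.choose c : ℝ)) / (N.choose θ : ℝ)
            else 0)
          else (if (a, b, c) = (0, 0, 0) then 1 else 0)))
    -- joint law of (Θ, W): given Θ = θ, W is multinomial with θ trials and
    -- probabilities (S/N, I/N, R/N) (sampling with replacement):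
    (hlaw : ∀ (θ a b c : ℕ),
      (Pr {ω | Θ ω = θ ∧ W ω = (a, b, c)}).toReal =
        (Pr {ω | Θ ω = θ}).toReal *
          (if a + b + c = θ then
            ((θ.factorial : ℝ) /
                ((a.factorial : ℝ) * (b.factorial : ℝ) * (c.factorial : ℝ))) *
              ((S : ℝ) / N) ^ a * ((I : ℝ) / N) ^ b * ((R : ℝ) / N) ^ c
          else 0)) :
    ∀ A : Set (ℕ × ℕ × ℕ),
      |(Pr (WN ⁻¹' A)).toReal - (Pr (W ⁻¹' A)).toReal| ≤
        (1 - ∫ ω, ∏ j ∈ Finset.range (Θ ω), (((N : ℝ) - j) / N) ∂Pr)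
          + (Pr {ω | N < Θ ω}).toReal :=
  stmt18_general Pr N S I R Θ hΘ WN W hWN hW hlawN hlaw
end
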